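/- arXiv:1905.06062 — 7 statements merged into one kernel-verified Lean document; each statement's English description precedes it below -/
import Mathlib

section
/- The structure T_ℚ of all partial functions f : ℚ → ω whose domain is a proper initial segment of ℚ, such that f is empty or dom(f) has a maximum and f is a finite step function (piecewise constant on finitely many half-open intervals (q_i, q_{i+1}] with q_0 = -∞), ordered by inclusion, satisfies the axioms DPM: it is a pseudotree with least element, every two elements have an infimum, it satisfies Infinite Splitting, and it satisfies Density. -/
/-- The pseudotree `T_ℚ`: partial functions `f : ℚ → ω` (coded with `Option`) whose domain
is a proper initial segment of `ℚ` and which are empty or finite step functions whose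
domain has a maximum: there are `-∞ = q₀ < q₁ < ⋯ < qₙ = max (dom f)` with `f` constant on
each piece `(qᵢ, qᵢ₊₁]`. -/
def TQ : Set (ℚ → Option ℕ) :=
  {f | (∀ q, f q = none) ∨
    ∃ (n : ℕ) (q : Fin (n + 1) → ℚ) (c : Fin (n + 1) → ℕ),
      StrictMono q ∧
      (∀ r : ℚ, f r ≠ none ↔ r ≤ q (Fin.last n)) ∧
      (∀ r : ℚ, r ≤ q 0 → f r = some (c 0)) ∧
      ∀ i : Fin n, ∀ r : ℚ, q i.castSucc < r → r ≤ q i.succ → f r = some (c i.succ)}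

/-- The extension (inclusion) order on partial functions. -/
def TQle (f g : ℚ → Option ℕ) : Prop := ∀ (q : ℚ) (m : ℕ), f q = some m → g q = some m

/-- Strict extension. -/
def TQlt (f g : ℚ → Option ℕ) : Prop := TQle f g ∧ ¬ TQle g f

/-- `m` is the infimum of `f` and `g` in `T_ℚ`. -/
def TQIsInf (f g m : ↥TQ) : Prop :=
  TQle m.1 f.1 ∧ TQle m.1 g.1 ∧ ∀ h : ↥TQ, TQle h.1 f.1 → TQle h.1 g.1 → TQle h.1 m.1

/-!
Elements of `T_ℚ` are exactly the functions whose domain is empty or some `Iic a` and which are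
step functions for a finite set of breakpoints (`IsStepFun`); this description is stable under
truncation and under padding with a constant. The infimum of `f` and `g` is `f` truncated at the
last point up to which they agree: such a point exists because agreement at `r` propagates up to
the next breakpoint of `f` or `g`. Splitting pads the common part `g` with a value that no `F i`
takes (each has finite range), and density truncates `f` strictly between the domains of `g`
and `f`.
-/

section StepFun

variable {α β : Type*} [LinearOrder α]

/-- `f` is constant on every interval `[r, s]` such that `[r, s)` misses `S`; for finite `S`
these are the step functions constant on the pieces `(-∞, x₀], (x₀, x₁], …` cut out by
`S`. -/
def IsStepFun (f : α → Option β) (S : Finset α) : Prop :=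
  ∀ ⦃r s : α⦄, r ≤ s → (∀ x ∈ S, x ∉ Set.Ico r s) → f r = f s

def truncateAt (f : α → Option β) (p : α) : α → Option β :=
  fun r => if r ≤ p then f r else none

def padAt (f : α → Option β) (p : α) (c : β) : α → Option β :=
  truncateAt (fun r => some ((f r).getD c)) p

def agreeSet (f g : α → Option β) : Set α :=
  {r | f r ≠ none ∧ ∀ s ≤ r, f s = g s}

lemma Finset.exists_least_ge_of_mem {S : Finset α} {r x : α} (hx : x ∈ S) (hrx : r ≤ x) :
    ∃ s ∈ S, r ≤ s ∧ ∀ y ∈ S, r ≤ y → s ≤ y := by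
  classical
  have hne : (S.filter (r ≤ ·)).Nonempty := ⟨x, Finset.mem_filter.2 ⟨hx, hrx⟩⟩
  obtain ⟨hs, hrs⟩ := Finset.mem_filter.1 ((S.filter (r ≤ ·)).min'_mem hne)
  exact ⟨_, hs, hrs, fun y hy hry => Finset.min'_le _ y (Finset.mem_filter.2 ⟨hy, hry⟩)⟩

namespace IsStepFun

variable {f g : α → Option β} {S T : Finset α}

lemma mono (h : IsStepFun f S) (hST : S ⊆ T) : IsStepFun f T :=
  fun _ _ hrs hT => h hrs fun x hx => hT x (hST hx)

lemma comp {γ : Type*} (h : IsStepFun f S) (φ : Option β → Option γ) :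
    IsStepFun (φ ∘ f) S :=
  fun _ _ hrs hS => congrArg φ (h hrs hS)

lemma truncateAt (h : IsStepFun f S) (p : α) : IsStepFun (truncateAt f p) (insert p S) := by
  intro r s hrs hS
  have hpS : p ∉ Set.Ico r s := hS p (Finset.mem_insert_self p S)
  have hf : f r = f s := h hrs fun x hx => hS x (Finset.mem_insert_of_mem hx)
  simp only [_root_.truncateAt]
  by_cases hsp : s ≤ p
  · rw [if_pos (hrs.trans hsp), if_pos hsp, hf]
  · have hrp : ¬ r ≤ p := fun hrp => hpS ⟨hrp, not_le.1 hsp⟩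
    rw [if_neg hrp, if_neg hsp]

lemma apply_eq_of_forall_ge (h : IsStepFun f S) {r s t : α} (hs : ∀ y ∈ S, r ≤ y → s ≤ y)
    (hrt : r ≤ t) (hts : t ≤ s) : f r = f t :=
  h hrt fun y hy hyI => absurd (hs y hy hyI.1) (not_le.2 (hyI.2.trans_le hts))

lemma range_subset (h : IsStepFun f S) {b : Option β}
    (hb : ∀ r, (∀ x ∈ S, x < r) → f r = b) : Set.range f ⊆ insert b (f '' S) := by
  rintro _ ⟨r, rfl⟩
  by_cases hr : ∃ x ∈ S, r ≤ x
  · obtain ⟨x, hx, hrx⟩ := hr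
    obtain ⟨s, hs, hrs, hmin⟩ := Finset.exists_least_ge_of_mem hx hrx
    exact Or.inr ⟨s, hs, (h.apply_eq_of_forall_ge hmin hrs le_rfl).symm⟩
  · simp only [not_exists, not_and, not_le] at hr
    exact Or.inl (hb r hr)

lemma exists_isGreatest_agreeSet (hf : IsStepFun f S) (hg : IsStepFun g S) {a : α}
    (ha : a ∈ S) (hfa : ∀ r, f r ≠ none → r ≤ a) (hne : (agreeSet f g).Nonempty) :
    ∃ p, IsGreatest (agreeSet f g) p := by
  classical
  have hnext : ∀ r ∈ agreeSet f g, ∃ s ∈ S, s ∈ agreeSet f g ∧ r ≤ s := by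
    rintro r ⟨hfr, hagree⟩
    obtain ⟨s, hs, hrs, hmin⟩ := Finset.exists_least_ge_of_mem ha (hfa r hfr)
    refine ⟨s, hs, ⟨hf.apply_eq_of_forall_ge hmin hrs le_rfl ▸ hfr, fun t hts => ?_⟩, hrs⟩
    rcases le_total t r with htr | hrt
    · exact hagree t htr
    · rw [← hf.apply_eq_of_forall_ge hmin hrt hts, ← hg.apply_eq_of_forall_ge hmin hrt hts]
      exact hagree r le_rfl
  obtain ⟨r₀, hr₀⟩ := hne
  obtain ⟨s₀, hs₀, hs₀A, -⟩ := hnext r₀ hr₀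
  set B := S.filter (· ∈ agreeSet f g)
  have hB : B.Nonempty := ⟨s₀, Finset.mem_filter.2 ⟨hs₀, hs₀A⟩⟩
  refine ⟨B.max' hB, (Finset.mem_filter.1 (B.max'_mem hB)).2, fun r hr => ?_⟩
  obtain ⟨s, hs, hsA, hrs⟩ := hnext r hr
  exact hrs.trans (B.le_max' s (Finset.mem_filter.2 ⟨hs, hsA⟩))

end IsStepFun

end StepFun

section Order

variable {f g h : ℚ → Option ℕ} {p r : ℚ}

lemma TQle_antisymm (hfg : TQle f g) (hgf : TQle g f) : f = g := by
  funext r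
  cases hf : f r with
  | some v => exact (hfg r v hf).symm
  | none =>
    cases hg : g r with
    | none => rfl
    | some v => simpa [hf] using hgf r v hg

lemma not_TQle_of_ne_none (hf : f r ≠ none) (hg : g r = none) : ¬ TQle f g := fun hfg => by
  obtain ⟨v, hv⟩ := Option.ne_none_iff_exists'.1 hf
  simpa [hg] using hfg r v hv

lemma apply_eq_of_TQle_of_TQle (hfh : TQle f h) (hgh : TQle g h) (hf : f r ≠ none)
    (hg : g r ≠ none) : f r = g r := by
  obtain ⟨v, hv⟩ := Option.ne_none_iff_exists'.1 hf
  obtain ⟨w, hw⟩ := Option.ne_none_iff_exists'.1 hg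
  rw [hv, hw, ← hfh r v hv, hgh r w hw]

@[simp]
lemma truncateAt_eq_some_iff {v : ℕ} :
    truncateAt f p r = some v ↔ r ≤ p ∧ f r = some v := by
  by_cases hrp : r ≤ p <;> simp [truncateAt, hrp]

lemma TQle_truncateAt (f : ℚ → Option ℕ) (p : ℚ) : TQle (truncateAt f p) f :=
  fun _ _ hv => (truncateAt_eq_some_iff.1 hv).2

lemma TQle_truncateAt_of_TQle (hgf : TQle g f) (hg : ∀ r, p < r → g r = none) :
    TQle g (truncateAt f p) := fun r v hv =>
  truncateAt_eq_some_iff.2 ⟨le_of_not_gt fun h => by simp [hg r h] at hv, hgf r v hv⟩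

lemma TQle_padAt (hg : ∀ r, p < r → g r = none) (c : ℕ) : TQle g (padAt g p c) :=
  fun r v hv => by
    have hrp : r ≤ p := le_of_not_gt fun h => by simp [hg r h] at hv
    simp [padAt, truncateAt, hrp, hv]

lemma eq_some_of_padAt_eq_some {c v : ℕ} (h : padAt g p c r = some v) (hv : v ≠ c) :
    g r = some v := by
  cases hg : g r <;> simp_all [padAt, truncateAt]

end Order

namespace TQ

variable {f g h : ℚ → Option ℕ}

lemma dom_eq (hf : f ∈ TQ) : (∀ r, f r = none) ∨ ∃ a, ∀ r, f r ≠ none ↔ r ≤ a := by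
  rcases hf with hnone | ⟨n, q, -, -, hdom, -⟩
  · exact Or.inl hnone
  · exact Or.inr ⟨_, hdom⟩

lemma exists_isStepFun (hf : f ∈ TQ) : ∃ S, IsStepFun f S := by
  classical
  rcases hf with hnone | ⟨n, q, c, -, hdom, h0, hi⟩
  · exact ⟨∅, fun r s _ _ => by rw [hnone, hnone]⟩
  refine ⟨Finset.univ.image q, fun r s hrs hS => ?_⟩
  have hq : ∀ j, q j ∉ Set.Ico r s := fun j =>
    hS _ (Finset.mem_image_of_mem q (Finset.mem_univ j))
  by_cases hs : s ≤ q (Fin.last n)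
  · obtain ⟨j, hsj, hmin⟩ := wellFounded_lt.has_min {j | s ≤ q j} ⟨_, hs⟩
    induction j using Fin.cases with
    | zero => rw [h0 r (hrs.trans hsj), h0 s hsj]
    | succ i =>
      have his : q i.castSucc < s := not_le.1 fun h => hmin _ h i.castSucc_lt_succ
      have hir : q i.castSucc < r := not_le.1 fun h => hq _ ⟨h, his⟩
      rw [hi i r hir (hrs.trans hsj), hi i s (hir.trans_le hrs) hsj]
  · have hr : ¬ r ≤ q (Fin.last n) := fun h => hq _ ⟨h, not_le.1 hs⟩
    rw [not_not.1 (mt (hdom r).1 hr), not_not.1 (mt (hdom s).1 hs)]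

lemma mem_of_isStepFun {a : ℚ} {S : Finset ℚ} (hdom : ∀ r, f r ≠ none ↔ r ≤ a)
    (hS : IsStepFun f S) : f ∈ TQ := by
  classical
  -- the breakpoints `q₀ < ⋯ < qₙ` of `f` as an element of `TQ`: the points of `S` below `a`,
  -- followed by `a`
  set T := insert a (S.filter (· < a))
  have hT : ∀ x ∈ T, x ≤ a := by
    simp only [T, Finset.mem_insert, Finset.mem_filter]
    rintro x (rfl | ⟨-, hx⟩)
    exacts [le_rfl, hx.le]
  have hcard : T.card = (T.card - 1) + 1 :=
    (Nat.succ_pred_eq_of_pos (Finset.card_pos.2 ⟨a, Finset.mem_insert_self _ _⟩)).symm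
  set q := T.orderEmbOfFin hcard
  have hqT : ∀ j, q j ∈ T := T.orderEmbOfFin_mem hcard
  have hTq : ∀ x ∈ T, ∃ j, q j = x := fun x hx => by
    rwa [← Finset.mem_coe, ← T.range_orderEmbOfFin hcard] at hx
  have hlast : q (Fin.last _) = a := by
    obtain ⟨j, hj⟩ := hTq a (Finset.mem_insert_self _ _)
    exact le_antisymm (hT _ (hqT _)) (hj ▸ q.monotone (Fin.le_last j))
  have hpiece : ∀ j r, r ≤ q j → (∀ m < j, q m < r) → f r = some ((f (q j)).getD 0) := by
    intro j r hrj hm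
    rw [Option.getD_of_ne_none ((hdom _).2 (hT _ (hqT j)))]
    refine hS hrj fun x hx hxI => ?_
    obtain ⟨m, rfl⟩ := hTq x (Finset.mem_insert_of_mem
      (Finset.mem_filter.2 ⟨hx, hxI.2.trans_le (hT _ (hqT j))⟩))
    exact absurd hxI.1 (not_le.2 (hm m (q.lt_iff_lt.1 hxI.2)))
  refine Or.inr ⟨_, q, fun j => (f (q j)).getD 0, q.strictMono, hlast ▸ hdom,
    fun r hr => hpiece 0 r hr fun m hm => absurd hm (Fin.not_lt_zero m),
    fun i r hir hri => hpiece i.succ r hri fun m hm => ?_⟩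
  exact (q.monotone (Fin.le_castSucc_iff.2 hm)).trans_lt hir

lemma ne_none_of_le (hf : f ∈ TQ) {r s : ℚ} (hrs : r ≤ s) (hs : f s ≠ none) :
    f r ≠ none := by
  rcases dom_eq hf with hnone | ⟨a, hdom⟩
  · exact absurd (hnone s) hs
  · exact (hdom r).2 (hrs.trans ((hdom s).1 hs))

lemma exists_eq_none (hf : f ∈ TQ) : ∃ q, f q = none := by
  rcases dom_eq hf with hnone | ⟨a, hdom⟩
  · exact ⟨0, hnone 0⟩
  · exact ⟨a + 1, not_not.1 fun h => by linarith [(hdom _).1 h]⟩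

lemma exists_lt_forall_le_eq_none (hf : f ∈ TQ) {q : ℚ} (hq : f q = none) :
    ∃ p < q, ∀ r, p ≤ r → f r = none := by
  rcases dom_eq hf with hnone | ⟨a, hdom⟩
  · exact ⟨q - 1, by linarith, fun r _ => hnone r⟩
  · have haq : a < q := not_le.1 fun h => (hdom q).2 h hq
    obtain ⟨p, hap, hpq⟩ := exists_between haq
    exact ⟨p, hpq, fun r hpr => not_not.1 fun h => (hdom r).1 h |>.not_gt (hap.trans_le hpr)⟩

lemma truncateAt_mem (hf : f ∈ TQ) {p : ℚ} (hp : f p ≠ none) : truncateAt f p ∈ TQ := by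
  obtain ⟨S, hS⟩ := exists_isStepFun hf
  refine mem_of_isStepFun (a := p) (fun r => ?_) (hS.truncateAt p)
  by_cases hrp : r ≤ p
  · simp [truncateAt, hrp, ne_none_of_le hf hrp hp]
  · simp [truncateAt, hrp]

lemma padAt_mem (hf : f ∈ TQ) (p : ℚ) (c : ℕ) : padAt f p c ∈ TQ := by
  obtain ⟨S, hS⟩ := exists_isStepFun hf
  refine mem_of_isStepFun (a := p) (fun r => ?_) ((hS.comp fun o => some (o.getD c)).truncateAt p)
  by_cases hrp : r ≤ p <;> simp [padAt, truncateAt, hrp]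

lemma finite_values (hf : f ∈ TQ) : {v | ∃ r, f r = some v}.Finite := by
  obtain ⟨S, hS⟩ := exists_isStepFun hf
  have hrange : (Set.range f).Finite := by
    rcases dom_eq hf with hnone | ⟨a, hdom⟩
    · exact (Set.finite_singleton none).subset (by rintro _ ⟨r, rfl⟩; exact hnone r)
    · refine (((insert a S).finite_toSet.image f).insert none).subset
        ((hS.mono (Finset.subset_insert a S)).range_subset fun r hr => ?_)
      exact not_not.1 fun h => (hdom r).1 h |>.not_gt (hr a (Finset.mem_insert_self a S))
  exact (hrange.preimage (Option.some_injective _).injOn : (some ⁻¹' Set.range f).Finite)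

lemma exists_isGreatest_agreeSet (hf : f ∈ TQ) (hg : g ∈ TQ) (hne : (agreeSet f g).Nonempty) :
    ∃ p, IsGreatest (agreeSet f g) p := by
  classical
  obtain ⟨Sf, hSf⟩ := exists_isStepFun hf
  obtain ⟨Sg, hSg⟩ := exists_isStepFun hg
  rcases dom_eq hf with hnone | ⟨a, hdom⟩
  · exact absurd (hnone _) hne.some_mem.1
  · have hf' := hSf.mono (Finset.subset_union_left.trans (Finset.subset_insert a (Sf ∪ Sg)))
    have hg' := hSg.mono (Finset.subset_union_right.trans (Finset.subset_insert a (Sf ∪ Sg)))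
    exact hf'.exists_isGreatest_agreeSet hg' (Finset.mem_insert_self a _) (fun r => (hdom r).1) hne

lemma TQle_or_TQle (hf : f ∈ TQ) (hg : g ∈ TQ) (hfh : TQle f h) (hgh : TQle g h) :
    TQle f g ∨ TQle g f := by
  by_cases hfg : ∃ r, g r ≠ none ∧ f r = none
  · obtain ⟨r, hgr, hfr⟩ := hfg
    refine Or.inl fun s v hs => ?_
    have hfs : f s ≠ none := by simp [hs]
    have hsr : s ≤ r := le_of_not_ge fun hrs => ne_none_of_le hf hrs hfs hfr
    rw [← apply_eq_of_TQle_of_TQle hfh hgh hfs (ne_none_of_le hg hsr hgr), hs]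
  · refine Or.inr fun s v hs => ?_
    have hgs : g s ≠ none := by simp [hs]
    have hfs : f s ≠ none := fun hfs => hfg ⟨s, hgs, hfs⟩
    rw [apply_eq_of_TQle_of_TQle hfh hgh hfs hgs, hs]

lemma mem_agreeSet_of_TQle (hh : h ∈ TQ) (hhf : TQle h f) (hhg : TQle h g)
    (hr : h r ≠ none) : r ∈ agreeSet f g := by
  obtain ⟨v, hv⟩ := Option.ne_none_iff_exists'.1 hr
  refine ⟨by simp [hhf r v hv], fun s hsr => ?_⟩
  obtain ⟨w, hw⟩ := Option.ne_none_iff_exists'.1 (ne_none_of_le hh hsr hr)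
  rw [hhf s w hw, hhg s w hw]

lemma exists_isInf (f g : ↥TQ) : ∃ m, TQIsInf f g m := by
  by_cases hne : (agreeSet f.1 g.1).Nonempty
  · obtain ⟨p, ⟨hfp, hagree⟩, hmax⟩ := exists_isGreatest_agreeSet f.2 g.2 hne
    refine ⟨⟨truncateAt f.1 p, truncateAt_mem f.2 hfp⟩, TQle_truncateAt _ _, fun r v hv => ?_,
      fun h hhf hhg => TQle_truncateAt_of_TQle hhf fun r hpr => ?_⟩
    · obtain ⟨hrp, hfr⟩ := truncateAt_eq_some_iff.1 hv
      rwa [← hagree r hrp]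
    · by_contra hr
      exact hpr.not_ge (hmax (mem_agreeSet_of_TQle h.2 hhf hhg hr))
  · refine ⟨⟨fun _ => none, Or.inl fun _ => rfl⟩, fun _ _ h => (by cases h),
      fun _ _ h => (by cases h), fun h hhf hhg r v hv => ?_⟩
    exact absurd ⟨r, mem_agreeSet_of_TQle h.2 hhf hhg (by simp [hv])⟩ hne

lemma exists_splitting (g : ↥TQ) {n : ℕ} (F : Fin n → ↥TQ) (hgF : ∀ i, TQle g.1 (F i).1) :
    ∃ fn : ↥TQ, TQlt g.1 fn.1 ∧ ∀ i, TQIsInf (F i) fn g := by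
  obtain ⟨c, hc⟩ := (Set.finite_iUnion fun i => finite_values (F i).2).exists_notMem
  obtain ⟨q, hq⟩ := exists_eq_none g.2
  obtain ⟨p, -, hp⟩ := exists_lt_forall_le_eq_none g.2 hq
  have hg_pad : TQle g.1 (padAt g.1 p c) := TQle_padAt (fun r hr => hp r hr.le) c
  refine ⟨⟨padAt g.1 p c, padAt_mem g.2 p c⟩,
    ⟨hg_pad, not_TQle_of_ne_none (by simp [padAt, truncateAt]) (hp p le_rfl)⟩,
    fun i => ⟨hgF i, hg_pad, fun h hhF hhpad r v hv => ?_⟩⟩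
  refine eq_some_of_padAt_eq_some (hhpad r v hv) fun hvc => hc ?_
  exact Set.mem_iUnion.2 ⟨i, r, hvc ▸ hhF r v hv⟩

lemma exists_between_of_TQlt {g f : ↥TQ} (hgf : TQlt g.1 f.1) :
    ∃ h : ↥TQ, TQlt g.1 h.1 ∧ TQlt h.1 f.1 := by
  obtain ⟨hle, hnle⟩ := hgf
  obtain ⟨q, v, hfq, hgv⟩ : ∃ q v, f.1 q = some v ∧ g.1 q ≠ some v := by
    simpa [TQle] using hnle
  have hgq : g.1 q = none := by
    cases hg : g.1 q with
    | none => rfl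
    | some w => exact absurd (hfq ▸ hle q w hg ▸ hg) hgv
  obtain ⟨p, hpq, hp⟩ := exists_lt_forall_le_eq_none g.2 hgq
  have hfp : f.1 p ≠ none := ne_none_of_le f.2 hpq.le (by simp [hfq])
  refine ⟨⟨truncateAt f.1 p, truncateAt_mem f.2 hfp⟩,
    ⟨TQle_truncateAt_of_TQle hle fun r hr => hp r hr.le,
      not_TQle_of_ne_none (by simpa [truncateAt] using hfp) (hp p le_rfl)⟩,
    TQle_truncateAt _ _, not_TQle_of_ne_none (r := q) (by simp [hfq]) ?_⟩
  simp [truncateAt, hpq.not_ge]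

end TQ

/-- `T_ℚ`, ordered by inclusion, satisfies the axioms DPM: it is a
partially ordered pseudotree with least element `0` (the empty function), any two elements
have an infimum, and it satisfies Infinite Splitting and Density. -/
theorem stmt8 :
    -- inclusion is a partial order on T_ℚ
    (∀ f : ↥TQ, TQle f.1 f.1) ∧
    (∀ f g h : ↥TQ, TQle f.1 g.1 → TQle g.1 h.1 → TQle f.1 h.1) ∧
    (∀ f g : ↥TQ, TQle f.1 g.1 → TQle g.1 f.1 → f = g) ∧
    -- pseudotree: linear below any element
    (∀ a b c : ↥TQ, TQle b.1 a.1 → TQle c.1 a.1 → TQle b.1 c.1 ∨ TQle c.1 b.1) ∧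
    -- least element 0
    ((fun _ : ℚ => (none : Option ℕ)) ∈ TQ ∧ ∀ f : ↥TQ, TQle (fun _ => none) f.1) ∧
    -- binary infima
    (∀ f g : ↥TQ, ∃ m : ↥TQ, TQIsInf f g m) ∧
    -- Infinite Splitting
    (∀ (g : ↥TQ) (n : ℕ) (F : Fin n → ↥TQ), (∀ i, TQle g.1 (F i).1) →
      (∀ i j : Fin n, i < j → TQIsInf (F i) (F j) g) →
      ∃ fn : ↥TQ, TQlt g.1 fn.1 ∧ ∀ i, TQIsInf (F i) fn g) ∧
    -- Density
    (∀ g f : ↥TQ, TQlt g.1 f.1 → ∃ h : ↥TQ, TQlt g.1 h.1 ∧ TQlt h.1 f.1) :=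
  ⟨fun _ _ _ h => h,
    fun _ _ _ hfg hgh q m hm => hgh q m (hfg q m hm),
    fun _ _ hfg hgf => Subtype.ext (TQle_antisymm hfg hgf),
    fun a b c hba hca => TQ.TQle_or_TQle b.2 c.2 hba hca,
    ⟨Or.inl fun _ => rfl, fun _ _ _ h => by cases h⟩,
    TQ.exists_isInf,
    fun g _ F hgF _ => TQ.exists_splitting g F hgF,
    fun _ _ => TQ.exists_between_of_TQlt⟩
end

section
/- Suppose T satisfies PM, Q satisfies DPM, a ∈ T, S is a finite substructure of T (closed under ∧ and containing 0), and π : S → Q is an embedding. Then there is a finite substructure S' of T containing S ∪ {a} and an embedding π' : S' → Q extending π. -/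
/-- A pseudotree order: the elements below any given element are linearly ordered. -/
def PseudotreeOrd (T : Type*) [Preorder T] : Prop :=
  ∀ a b c : T, b ≤ a → c ≤ a → b ≤ c ∨ c ≤ b

/-- The Infinite Splitting axiom of the theory DPM. -/
def InfSplitting (T : Type*) [SemilatticeInf T] : Prop :=
  ∀ (g : T) (n : ℕ) (f : Fin n → T), (∀ i, g ≤ f i) →
    (∀ i j : Fin n, i < j → f i ⊓ f j = g) →
    ∃ fn : T, g < fn ∧ ∀ i, f i ⊓ fn = g

/-- The Density axiom of the theory DPM. -/
def DenseOrd (T : Type*) [Preorder T] : Prop :=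
  ∀ g f : T, g < f → ∃ h, g < h ∧ h < f

/-!
A finite embedding extends one point at a time, adjoining `b` whenever `S ∪ {b}` is still closed
under `⊓`. Let `m` be the largest element of `S` below `b`. If some element of `S` lies above `b`,
the image of `b` is chosen by density strictly between `π m` and the image of the least such
element, avoiding the finitely many values of `π`. Otherwise infinite splitting gives a point
above `π m` that branches off at `π m` from the images of the covers of `m` in `S`. An arbitrary
`a` is reached in two such steps: first `c = max {s ⊓ a | s ∈ S}`, which meets every element of
`S` inside `S ∪ {c}`, and then `a` itself.
-/

open Set Function

section Order

variable {T : Type*}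

theorem PseudotreeOrd.exists_isGreatest [PartialOrder T] (hT : PseudotreeOrd T) {s : Set T}
    {b : T} (hs : s.Finite) (hne : s.Nonempty) (hsb : s ⊆ Iic b) : ∃ m, IsGreatest s m := by
  obtain ⟨m, hm⟩ := hs.exists_maximal hne
  exact ⟨m, hm.prop, fun x hx => (hT b x m (hsb hx) (hsb hm.prop)).elim id (hm.2 hx)⟩

variable [SemilatticeInf T]

theorem PseudotreeOrd.inf_eq_inf_of_le (hT : PseudotreeOrd T) {s t b : T} (hbt : b ≤ t)
    (hbs : ¬b ≤ s) : s ⊓ t = s ⊓ b := by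
  rcases hT t (s ⊓ t) b inf_le_right hbt with h | h
  · exact le_antisymm (le_inf inf_le_left h) (inf_le_inf_left s hbt)
  · exact absurd (h.trans inf_le_left) hbs

theorem PseudotreeOrd.inf_eq_inf_of_lt_of_le (hT : PseudotreeOrd T) {x y g q : T} (hgy : g < y)
    (hyx : y ≤ x) (hyq : y ⊓ q = g) : x ⊓ q = x ⊓ g := by
  rcases hT x (x ⊓ q) y inf_le_left hyx with h | h
  · calc x ⊓ q = x ⊓ q ⊓ y := (inf_eq_left.2 h).symm
      _ = x ⊓ g := by rw [← hyq, inf_right_comm, inf_assoc]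
  · exact absurd (hyq.symm.trans (inf_eq_left.2 (h.trans inf_le_right))) hgy.ne

theorem InfClosed.insert {S : Set T} (hS : InfClosed S) {b : T}
    (hb : ∀ s ∈ S, s ⊓ b ∈ insert b S) : InfClosed (insert b S) := by
  rintro x (rfl | hx) y (rfl | hy)
  · rw [inf_idem]; exact mem_insert _ _
  · rw [inf_comm]; exact hb y hy
  · exact hb x hx
  · exact mem_insert_of_mem b (hS hx hy)

theorem InfClosed.exists_isLeast {S : Set T} (hS : InfClosed S) (hfin : S.Finite)
    (hne : S.Nonempty) : ∃ m, IsLeast S m := by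
  obtain ⟨m, hm⟩ := hfin.exists_minimal hne
  exact ⟨m, hm.prop, fun x hx => (hm.2 (hS hm.prop hx) inf_le_left).trans inf_le_right⟩

theorem InfClosed.inf_eq_of_minimal {S : Set T} (hS : InfClosed S) {m c₁ c₂ : T}
    (h₁ : Minimal (· ∈ S ∩ Ioi m) c₁) (h₂ : Minimal (· ∈ S ∩ Ioi m) c₂) (hne : c₁ ≠ c₂) :
    c₁ ⊓ c₂ = m := by
  by_contra h
  have hmem : c₁ ⊓ c₂ ∈ S ∩ Ioi m :=
    ⟨hS h₁.prop.1 h₂.prop.1, (le_inf h₁.prop.2.le h₂.prop.2.le).lt_of_ne' h⟩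
  exact hne (le_antisymm ((h₁.2 hmem inf_le_left).trans inf_le_right)
    ((h₂.2 hmem inf_le_right).trans inf_le_left))

end Order

theorem DenseOrd.exists_mem_Ioo_notMem {Q : Type*} [Preorder Q] (hQ : DenseOrd Q) {F : Set Q}
    (hF : F.Finite) {u v : Q} (huv : u < v) : ∃ w ∈ Ioo u v, w ∉ F :=
  haveI : DenselyOrdered Q := ⟨hQ⟩
  ((Ioo_infinite huv).sdiff hF).nonempty

theorem InfSplitting.exists_forall_inf_eq {Q : Type*} [SemilatticeInf Q] (hQ : InfSplitting Q)
    {F : Set Q} (hF : F.Finite) {g : Q} (hgF : ∀ x ∈ F, g ≤ x)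
    (hpair : F.Pairwise (· ⊓ · = g)) : ∃ q, g < q ∧ ∀ x ∈ F, x ⊓ q = g := by
  obtain ⟨n, e, rfl⟩ := hF.fin_embedding
  obtain ⟨q, hgq, hq⟩ := hQ g n e (fun i => hgF _ ⟨i, rfl⟩)
    (fun i j hij => hpair ⟨i, rfl⟩ ⟨j, rfl⟩ (e.injective.ne hij.ne))
  exact ⟨q, hgq, by rintro _ ⟨i, rfl⟩; exact hq i⟩

/-- Embeddings `S → Q` are encoded as total functions `T → Q`; values off `S` play no role. -/
structure IsInfEmbeddingOn {T Q : Type*} [SemilatticeInf T] [SemilatticeInf Q] (f : T → Q)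
    (S : Set T) : Prop where
  injOn : S.InjOn f
  map_inf : ∀ x ∈ S, ∀ y ∈ S, f (x ⊓ y) = f x ⊓ f y

namespace IsInfEmbeddingOn

variable {T Q : Type*} [SemilatticeInf T] [SemilatticeInf Q] {f : T → Q} {S : Set T} {b m : T}

theorem le_iff (hf : IsInfEmbeddingOn f S) (hS : InfClosed S) {x y : T} (hx : x ∈ S)
    (hy : y ∈ S) : f x ≤ f y ↔ x ≤ y := by
  rw [← inf_eq_left, ← inf_eq_left, ← hf.map_inf x hx y hy]
  exact hf.injOn.eq_iff (hS hx hy) hx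

theorem lt_iff (hf : IsInfEmbeddingOn f S) (hS : InfClosed S) {x y : T} (hx : x ∈ S)
    (hy : y ∈ S) : f x < f y ↔ x < y := by
  rw [lt_iff_le_and_ne, lt_iff_le_and_ne, hf.le_iff hS hx hy, hf.injOn.ne_iff hx hy]

theorem update_insert [DecidableEq T] (hf : IsInfEmbeddingOn f S) (hS : InfClosed S) {q : Q}
    (hb : b ∉ S) (hSb : InfClosed (insert b S)) (hq_new : q ∉ f '' S)
    (hq_le : ∀ s ∈ S, b ≤ s → q ≤ f s) (hq_inf : ∀ s ∈ S, s ⊓ b ∈ S → f (s ⊓ b) = f s ⊓ q) :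
    IsInfEmbeddingOn (update f b q) (insert b S) := by
  have heq : EqOn (update f b q) f S := fun x hx => update_of_ne (ne_of_mem_of_not_mem hx hb) _ _
  have hinf_b : ∀ s ∈ S, update f b q (s ⊓ b) = update f b q s ⊓ update f b q b := by
    intro s hs
    rw [heq hs, update_self]
    rcases hSb (mem_insert_of_mem b hs) (mem_insert b S) with h | h
    · rw [h, update_self, inf_eq_right.2 (hq_le s hs (inf_eq_right.1 h))]
    · rw [heq h, hq_inf s hs h]
  refine ⟨(injOn_insert hb).2 ⟨hf.injOn.congr heq.symm, ?_⟩, ?_⟩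
  · rwa [update_self, heq.image_eq]
  · rintro x (rfl | hx) y (rfl | hy)
    · rw [inf_idem, inf_idem]
    · rw [inf_comm, hinf_b y hy, inf_comm]
    · exact hinf_b x hx
    · rw [heq (hS hx hy), heq hx, heq hy, hf.map_inf x hx y hy]

theorem exists_extend_insert_of_exists_le (hT : PseudotreeOrd T) (hdense : DenseOrd Q)
    (hf : IsInfEmbeddingOn f S) (hfin : S.Finite) (hS : InfClosed S) (hSb : InfClosed (insert b S))
    (hb : b ∉ S) (hm : IsGreatest (S ∩ Iic b) m) (hup : ∃ t ∈ S, b ≤ t) :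
    ∃ f', IsInfEmbeddingOn f' (insert b S) ∧ EqOn f' f S := by
  classical
  obtain ⟨t, ht⟩ : ∃ t, IsLeast (S ∩ Ici b) t :=
    InfClosed.exists_isLeast (fun x hx y hy => ⟨hS hx.1 hy.1, le_inf hx.2 hy.2⟩)
      (hfin.inter_of_left _) hup
  have hmt : m < t := (hm.1.2.lt_of_ne (ne_of_mem_of_not_mem hm.1.1 hb)).trans_le ht.1.2
  obtain ⟨q, hq, hq_new⟩ := hdense.exists_mem_Ioo_notMem (hfin.image f)
    ((hf.lt_iff hS hm.1.1 ht.1.1).2 hmt)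
  refine ⟨update f b q, hf.update_insert hS hb hSb hq_new (fun s hs hbs => ?_) (fun s hs hsb => ?_),
    fun x hx => update_of_ne (ne_of_mem_of_not_mem hx hb) _ _⟩
  · exact hq.2.le.trans ((hf.le_iff hS ht.1.1 hs).2 (ht.2 ⟨hs, hbs⟩))
  · have hbs : ¬b ≤ s := fun h => hb (inf_eq_right.2 h ▸ hsb)
    have hst : s ⊓ t = s ⊓ b := hT.inf_eq_inf_of_le ht.1.2 hbs
    refine le_antisymm (le_inf ((hf.le_iff hS hsb hs).2 inf_le_left)
      (((hf.le_iff hS hsb hm.1.1).2 (hm.2 ⟨hsb, inf_le_right⟩)).trans hq.1.le)) ?_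
    calc f s ⊓ q ≤ f s ⊓ f t := inf_le_inf_left _ hq.2.le
      _ = f (s ⊓ b) := by rw [← hf.map_inf s hs t ht.1.1, hst]

theorem exists_extend_insert_of_not_exists_le (hQ : PseudotreeOrd Q) (hsplit : InfSplitting Q)
    (hf : IsInfEmbeddingOn f S) (hfin : S.Finite) (hS : InfClosed S) (hSb : InfClosed (insert b S))
    (hb : b ∉ S) (hm : IsGreatest (S ∩ Iic b) m) (hup : ¬∃ t ∈ S, b ≤ t) :
    ∃ f', IsInfEmbeddingOn f' (insert b S) ∧ EqOn f' f S := by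
  classical
  -- distinct covers of `m` in `S` meet in `m`, so their images pairwise meet in `f m`
  set C := {c | Minimal (· ∈ S ∩ Ioi m) c}
  have hCS : C ⊆ S := fun c hc => hc.prop.1
  obtain ⟨q, hmq, hCq⟩ := hsplit.exists_forall_inf_eq ((hfin.subset hCS).image f) (g := f m)
    (by rintro _ ⟨c, hc, rfl⟩; exact (hf.le_iff hS hm.1.1 (hCS hc)).2 hc.prop.2.le)
    (by
      rintro _ ⟨c₁, h₁, rfl⟩ _ ⟨c₂, h₂, rfl⟩ hne
      rw [← hf.map_inf _ (hCS h₁) _ (hCS h₂), hS.inf_eq_of_minimal h₁ h₂ (ne_of_apply_ne f hne)])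
  have hq : ∀ s ∈ S, f s ⊓ q = f s ⊓ f m := by
    intro s hs
    by_cases hms : m ≤ s
    · rcases hms.eq_or_lt with rfl | hms
      · rw [inf_idem, inf_eq_left.2 hmq.le]
      · obtain ⟨c, hcs, hc⟩ :=
          (hfin.inter_of_left _).exists_le_minimal (⟨hs, hms⟩ : s ∈ S ∩ Ioi m)
        exact hQ.inf_eq_inf_of_lt_of_le ((hf.lt_iff hS hm.1.1 hc.prop.1).2 hc.prop.2)
          ((hf.le_iff hS hc.prop.1 hs).2 hcs) (hCq _ ⟨c, hc, rfl⟩)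
    · exact hQ.inf_eq_inf_of_le hmq.le (mt (hf.le_iff hS hm.1.1 hs).1 hms)
  have hq_new : q ∉ f '' S := by
    rintro ⟨s, hs, rfl⟩
    have h := hq s hs
    rw [inf_idem] at h
    exact hmq.not_ge (h ▸ inf_le_right)
  refine ⟨update f b q, hf.update_insert hS hb hSb hq_new (fun s hs hbs => absurd ⟨s, hs, hbs⟩ hup)
    (fun s hs hsb => ?_), fun x hx => update_of_ne (ne_of_mem_of_not_mem hx hb) _ _⟩
  have hsm : s ⊓ b = s ⊓ m :=
    le_antisymm (le_inf inf_le_left (hm.2 ⟨hsb, inf_le_right⟩)) (inf_le_inf_left s hm.1.2)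
  rw [hq s hs, ← hf.map_inf s hs m hm.1.1, hsm]

theorem exists_extend_insert [OrderBot T] (hT : PseudotreeOrd T) (hQ : PseudotreeOrd Q)
    (hsplit : InfSplitting Q) (hdense : DenseOrd Q) (hf : IsInfEmbeddingOn f S) (hfin : S.Finite)
    (hS : InfClosed S) (hbot : ⊥ ∈ S) (hSb : InfClosed (insert b S)) :
    ∃ f', IsInfEmbeddingOn f' (insert b S) ∧ EqOn f' f S := by
  by_cases hb : b ∈ S
  · exact ⟨f, by rwa [insert_eq_of_mem hb], eqOn_refl f S⟩
  obtain ⟨m, hm⟩ := hT.exists_isGreatest (hfin.inter_of_left (Iic b)) ⟨⊥, hbot, bot_le⟩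
    inter_subset_right
  by_cases hup : ∃ t ∈ S, b ≤ t
  · exact hf.exists_extend_insert_of_exists_le hT hdense hfin hS hSb hb hm hup
  · exact hf.exists_extend_insert_of_not_exists_le hQ hsplit hfin hS hSb hb hm hup

theorem exists_extend [OrderBot T] (hT : PseudotreeOrd T) (hQ : PseudotreeOrd Q)
    (hsplit : InfSplitting Q) (hdense : DenseOrd Q) (hf : IsInfEmbeddingOn f S) (hfin : S.Finite)
    (hS : InfClosed S) (hbot : ⊥ ∈ S) (a : T) :
    ∃ S', S ⊆ S' ∧ S'.Finite ∧ InfClosed S' ∧ a ∈ S' ∧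
      ∃ f', IsInfEmbeddingOn f' S' ∧ EqOn f' f S := by
  obtain ⟨_, ⟨s₀, hs₀, rfl⟩, hc⟩ := hT.exists_isGreatest (b := a) (hfin.image (· ⊓ a))
    ⟨_, mem_image_of_mem _ hbot⟩ (by rintro _ ⟨s, -, rfl⟩; exact inf_le_right)
  have hsa : ∀ s ∈ S, s ⊓ a = s ⊓ (s₀ ⊓ a) := fun s hs =>
    le_antisymm (le_inf inf_le_left (hc ⟨s, hs, rfl⟩)) (inf_le_inf_left s inf_le_right)
  have hS₁ : InfClosed (insert (s₀ ⊓ a) S) := hS.insert fun s hs => by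
    by_cases h : s₀ ⊓ a ≤ s
    · exact .inl (inf_eq_right.2 h)
    · rw [← hT.inf_eq_inf_of_le inf_le_left h]; exact .inr (hS hs hs₀)
  have hS₂ : InfClosed (insert a (insert (s₀ ⊓ a) S)) := hS₁.insert <| by
    rintro s (rfl | hs)
    · exact .inr (.inl (inf_eq_left.2 inf_le_right))
    · rw [hsa s hs]; exact .inr (hS₁ (.inr hs) (.inl rfl))
  obtain ⟨f₁, hf₁, hf₁f⟩ := hf.exists_extend_insert hT hQ hsplit hdense hfin hS hbot hS₁
  obtain ⟨f₂, hf₂, hf₂f₁⟩ :=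
    hf₁.exists_extend_insert hT hQ hsplit hdense (hfin.insert _) hS₁ (.inr hbot) hS₂
  exact ⟨_, (subset_insert _ _).trans (subset_insert _ _), (hfin.insert _).insert _, hS₂,
    mem_insert _ _, f₂, hf₂, fun x hx => (hf₂f₁ (.inr hx)).trans (hf₁f hx)⟩

end IsInfEmbeddingOn

/-- Lemma 4.9, one-point extension: if `T ⊨ PM`, `Q ⊨ DPM`, `a ∈ T`,
`S` is a finite substructure of `T` and `π : S → Q` an embedding, then `π` extends to an
embedding of a finite substructure `S'` containing `S ∪ {a}`. -/
theorem stmt9 {T Q : Type*} [SemilatticeInf T] [OrderBot T]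
    [SemilatticeInf Q] [OrderBot Q]
    (hT : PseudotreeOrd T) (hQ : PseudotreeOrd Q)
    (hsplit : InfSplitting Q) (hdense : DenseOrd Q)
    (a : T) (S : Set T) (hfin : S.Finite) (hbot : ⊥ ∈ S)
    (hcl : ∀ x ∈ S, ∀ y ∈ S, x ⊓ y ∈ S)
    (π : ↥S → Q) (hinj : Function.Injective π)
    (hπbot : π ⟨⊥, hbot⟩ = ⊥)
    (hπinf : ∀ x y : ↥S, π ⟨x.1 ⊓ y.1, hcl _ x.2 _ y.2⟩ = π x ⊓ π y) :
    ∃ (S' : Set T) (hsub : S ⊆ S') (hbot' : ⊥ ∈ S')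
      (hcl' : ∀ x ∈ S', ∀ y ∈ S', x ⊓ y ∈ S'),
      S'.Finite ∧ a ∈ S' ∧
      ∃ π' : ↥S' → Q, Function.Injective π' ∧
        π' ⟨⊥, hbot'⟩ = ⊥ ∧
        (∀ x y : ↥S', π' ⟨x.1 ⊓ y.1, hcl' _ x.2 _ y.2⟩ = π' x ⊓ π' y) ∧
        ∀ (x : T) (hx : x ∈ S), π' ⟨x, hsub hx⟩ = π ⟨x, hx⟩ := by
  classical
  let f : T → Q := fun x => if h : x ∈ S then π ⟨x, h⟩ else ⊥
  have hfπ : ∀ x : ↥S, f x = π x := fun x => dif_pos x.2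
  have hf : IsInfEmbeddingOn f S :=
    ⟨fun x hx y hy h => congrArg Subtype.val
        (hinj ((hfπ ⟨x, hx⟩).symm.trans (h.trans (hfπ ⟨y, hy⟩)))),
      fun x hx y hy => by rw [hfπ ⟨_, hcl x hx y hy⟩, hfπ ⟨x, hx⟩, hfπ ⟨y, hy⟩, ← hπinf]⟩
  obtain ⟨S', hSS', hfin', hS', haS', f', hf', hf'f⟩ :=
    hf.exists_extend hT hQ hsplit hdense hfin (fun x hx y hy => hcl x hx y hy) hbot a
  refine ⟨S', hSS', hSS' hbot, fun x hx y hy => hS' hx hy, hfin', haS', fun x => f' x,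
    fun x y h => Subtype.ext (hf'.injOn x.2 y.2 h), ?_, fun x y => hf'.map_inf _ x.2 _ y.2,
    fun x hx => (hf'f hx).trans (hfπ ⟨x, hx⟩)⟩
  exact (hf'f hbot).trans ((hfπ ⟨⊥, hbot⟩).trans hπbot)
end

section
/- Any two countable models of DPM are isomorphic. -/
/-!
Back and forth over finite partial isomorphisms. To put a new point `t` into the domain, first add
the missing meets `t ⊓ x`, which lie on the chain below `t`, from the bottom up. Once all meets of
`t` with the domain are present, `t` meets every domain point not above it exactly where the
largest domain point `m` below `t` does, so its image `q` must lie strictly above the image of `m`: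
below the image of the least domain point above `t` (Density) if there is one, and otherwise
meeting every point of the range exactly where the image of `m` does (Infinite Splitting).
-/

section Splitting

variable {β : Type*} [SemilatticeInf β]

theorem Finset.exists_pairwise_inf_eq_subset_covering (p : β) (C : Finset β)
    (hC : ∀ c ∈ C, p < c) :
    ∃ D ⊆ C, (D : Set β).Pairwise (fun d d' => d ⊓ d' = p) ∧ ∀ c ∈ C, ∃ d ∈ D, p < c ⊓ d := by
  classical
  induction C using Finset.induction_on with
  | empty => exact ⟨∅, subset_rfl, by simp, by simp⟩
  | insert c C _ ih =>
    obtain ⟨D, hDC, hD, hcover⟩ := ih fun b hb => hC b (mem_insert_of_mem hb)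
    by_cases hc : ∃ d ∈ D, p < c ⊓ d
    · refine ⟨D, hDC.trans (subset_insert _ _), hD, fun b hb => ?_⟩
      rcases mem_insert.1 hb with rfl | hb
      exacts [hc, hcover b hb]
    push Not at hc
    have hpc := hC c (mem_insert_self c C)
    refine ⟨insert c D, insert_subset_insert c hDC, ?_, fun b hb => ?_⟩
    · rw [coe_insert, Set.pairwise_insert]
      refine ⟨hD, fun d hd _ => ?_⟩
      have hpcd : p ≤ c ⊓ d := le_inf hpc.le (hC d (mem_insert_of_mem (hDC hd))).le
      have hcd : c ⊓ d = p := (hpcd.lt_or_eq.resolve_left (hc d hd)).symm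
      exact ⟨hcd, by rwa [inf_comm]⟩
    · rcases mem_insert.1 hb with rfl | hb
      · exact ⟨b, mem_insert_self b D, by rwa [inf_idem]⟩
      · obtain ⟨d, hd, hbd⟩ := hcover b hb
        exact ⟨d, mem_insert_of_mem hd, hbd⟩

theorem InfSplitting.exists_forall_inf_eq_s11 (hsplit : InfSplitting β) (p : β) (D : Finset β)
    (hpD : ∀ d ∈ D, p ≤ d) (hD : (D : Set β).Pairwise (fun d d' => d ⊓ d' = p)) :
    ∃ q, p < q ∧ ∀ d ∈ D, d ⊓ q = p := by
  let f : Fin D.card → β := fun i => D.equivFin.symm i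
  obtain ⟨q, hpq, hq⟩ := hsplit p D.card f (fun i => hpD _ (D.equivFin.symm i).2)
    fun i j hij => hD (D.equivFin.symm i).2 (D.equivFin.symm j).2
      fun h => hij.ne (D.equivFin.symm.injective (Subtype.ext h))
  refine ⟨q, hpq, fun d hd => ?_⟩
  simpa [f] using hq (D.equivFin ⟨d, hd⟩)

namespace PseudotreeOrd

variable (hβ : PseudotreeOrd β)
include hβ

theorem inf_eq_inf_of_not_le {p q b : β} (hpq : p ≤ q) (hpb : ¬p ≤ b) : q ⊓ b = p ⊓ b := by
  rcases hβ q p (q ⊓ b) hpq inf_le_left with h | h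
  · exact absurd (h.trans inf_le_right) hpb
  · exact le_antisymm (le_inf h inf_le_right) (inf_le_inf_right b hpq)

theorem inf_eq_of_lt_inf {p q c d : β} (hpq : p ≤ q) (hqd : d ⊓ q = p) (hcd : p < c ⊓ d) :
    q ⊓ c = p := by
  have hpc : p ≤ c := hcd.le.trans inf_le_left
  rcases hβ c (q ⊓ c) (c ⊓ d) inf_le_right inf_le_left with h | h
  · refine le_antisymm ?_ (le_inf hpq hpc)
    rw [← hqd, inf_comm d]
    exact le_inf inf_le_left (h.trans inf_le_right)
  · refine absurd ?_ hcd.not_ge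
    rw [← hqd, inf_comm d]
    exact le_inf (h.trans inf_le_left) inf_le_right

/-- Infinite splitting applied to one representative of each cone above `p` that meets `B`. -/
theorem exists_gt_forall_inf_eq (hsplit : InfSplitting β) (B : Finset β) (p : β) :
    ∃ q, p < q ∧ ∀ b ∈ B, q ⊓ b = p ⊓ b := by
  classical
  obtain ⟨D, hDB, hD, hcover⟩ :=
    (B.filter (p < ·)).exists_pairwise_inf_eq_subset_covering p
      fun c hc => (Finset.mem_filter.1 hc).2
  obtain ⟨q, hpq, hq⟩ := hsplit.exists_forall_inf_eq_s11 p D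
    (fun d hd => (Finset.mem_filter.1 (hDB hd)).2.le) hD
  refine ⟨q, hpq, fun b hb => ?_⟩
  by_cases hpb : p ≤ b
  · rcases hpb.lt_or_eq with hpb | rfl
    · obtain ⟨d, hd, hbd⟩ := hcover b (Finset.mem_filter.2 ⟨hb, hpb⟩)
      rw [hβ.inf_eq_of_lt_inf hpq.le (hq d hd) hbd, inf_eq_left.2 hpb.le]
    · rw [inf_idem, inf_eq_right.2 hpq.le]
  · exact hβ.inf_eq_inf_of_not_le hpq.le hpb

end PseudotreeOrd

end Splitting

/-- A partial isomorphism of `(α, ⊥, ⊓)` with `(β, ⊥, ⊓)`, given by its graph. -/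
structure IsInfPartialIso {α β : Type*} [SemilatticeInf α] [OrderBot α] [SemilatticeInf β]
    [OrderBot β] (R : Set (α × β)) : Prop where
  bot_mem : ⊥ ∈ R
  inf_mem : ∀ ⦃x⦄, x ∈ R → ∀ ⦃y⦄, y ∈ R → x ⊓ y ∈ R
  le_iff : ∀ ⦃x⦄, x ∈ R → ∀ ⦃y⦄, y ∈ R → (x.1 ≤ y.1 ↔ x.2 ≤ y.2)

theorem PseudotreeOrd.exists_max_le {α ι : Type*} [Preorder α] (hα : PseudotreeOrd α)
    (f : ι → α) (s : Finset ι) {t : α} (hs : ∃ i ∈ s, f i ≤ t) :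
    ∃ i ∈ s, f i ≤ t ∧ ∀ j ∈ s, f j ≤ t → f j ≤ f i := by
  classical
  obtain ⟨i, hi, hmax⟩ :=
    (s.filter (f · ≤ t)).exists_maximalFor f (by simpa [Finset.Nonempty] using hs)
  rw [Finset.mem_filter] at hi
  refine ⟨i, hi.1, hi.2, fun j hj hjt => ?_⟩
  rcases hα t (f j) (f i) hjt hi.2 with h | h
  exacts [h, hmax (Finset.mem_filter.2 ⟨hj, hjt⟩) h]

namespace IsInfPartialIso

variable {α β : Type*} [SemilatticeInf α] [OrderBot α] [SemilatticeInf β] [OrderBot β]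
  {R : Set (α × β)}

theorem snd_eq (hR : IsInfPartialIso R) {a : α} {b b' : β} (h : (a, b) ∈ R) (h' : (a, b') ∈ R) :
    b = b' :=
  le_antisymm ((hR.le_iff h h').1 le_rfl) ((hR.le_iff h' h).1 le_rfl)

theorem fst_eq (hR : IsInfPartialIso R) {a a' : α} {b : β} (h : (a, b) ∈ R) (h' : (a', b) ∈ R) :
    a = a' :=
  le_antisymm ((hR.le_iff h h').2 le_rfl) ((hR.le_iff h' h).2 le_rfl)

theorem singleton_bot : IsInfPartialIso ({⊥} : Set (α × β)) where
  bot_mem := rfl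
  inf_mem := by rintro _ rfl _ rfl; exact inf_idem _
  le_iff := by rintro _ rfl _ rfl; simp

theorem preimage_swap (hR : IsInfPartialIso R) : IsInfPartialIso (Prod.swap ⁻¹' R) where
  bot_mem := hR.bot_mem
  inf_mem _ hx _ hy := hR.inf_mem hx hy
  le_iff _ hx _ hy := (hR.le_iff hx hy).symm

theorem sUnion {C : Set (Set (α × β))} (hne : C.Nonempty) (hdir : DirectedOn (· ⊆ ·) C)
    (hC : ∀ R ∈ C, IsInfPartialIso R) : IsInfPartialIso (⋃₀ C) := by
  have common : ∀ ⦃x⦄, x ∈ ⋃₀ C → ∀ ⦃y⦄, y ∈ ⋃₀ C → ∃ R ∈ C, x ∈ R ∧ y ∈ R := by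
    rintro x ⟨R, hR, hx⟩ y ⟨R', hR', hy⟩
    obtain ⟨R'', hR'', hRR'', hR'R''⟩ := hdir R hR R' hR'
    exact ⟨R'', hR'', hRR'' hx, hR'R'' hy⟩
  obtain ⟨R, hR⟩ := hne
  refine ⟨⟨R, hR, (hC R hR).bot_mem⟩, fun x hx y hy => ?_, fun x hx y hy => ?_⟩
  · obtain ⟨R, hR, hx, hy⟩ := common hx hy
    exact ⟨R, hR, (hC R hR).inf_mem hx hy⟩
  · obtain ⟨R, hR, hx, hy⟩ := common hx hy
    exact (hC R hR).le_iff hx hy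

theorem insert (hR : IsInfPartialIso R) {t : α} {q : β} {m : α × β} (hm : m ∈ R) (hmt : m.1 ≤ t)
    (hmax : ∀ x ∈ R, x.1 ≤ t → x.1 ≤ m.1) (hmq : m.2 < q)
    (hbelow : ∀ x ∈ R, ¬t ≤ x.1 → t ⊓ x.1 = m.1 ⊓ x.1 ∧ q ⊓ x.2 = m.2 ⊓ x.2)
    (habove : ∀ x ∈ R, t ≤ x.1 → q < x.2) : IsInfPartialIso (Insert.insert (t, q) R) := by
  have hle : ∀ x ∈ R, x.1 ≤ t ↔ x.2 ≤ q := by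
    refine fun x hx => ⟨fun h => ((hR.le_iff hx hm).1 (hmax x hx h)).trans hmq.le, fun h => ?_⟩
    by_cases htx : t ≤ x.1
    · exact absurd h (habove x hx htx).not_ge
    · have hxm : x.2 ≤ m.2 := by
        rw [← inf_eq_right.2 h, (hbelow x hx htx).2]
        exact inf_le_left
      exact (hmax x hx ((hR.le_iff hx hm).2 hxm |>.trans hmt)).trans hmt
  have hge : ∀ x ∈ R, t ≤ x.1 ↔ q ≤ x.2 := by
    refine fun x hx => ⟨fun h => (habove x hx h).le, fun h => by_contra fun htx => ?_⟩
    have hqm : q ≤ m.2 := by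
      rw [← inf_eq_left.2 h, (hbelow x hx htx).2]
      exact inf_le_left
    exact hmq.not_ge hqm
  have hinf : ∀ x ∈ R, (t, q) ⊓ x ∈ Insert.insert (t, q) R := by
    intro x hx
    by_cases htx : t ≤ x.1
    · rw [inf_eq_left.2 (Prod.mk_le_mk.2 ⟨htx, (hge x hx).1 htx⟩)]
      exact Set.mem_insert _ _
    · have hmx : (t, q) ⊓ x = m ⊓ x := Prod.ext (hbelow x hx htx).1 (hbelow x hx htx).2
      exact hmx ▸ Set.mem_insert_of_mem _ (hR.inf_mem hm hx)
  refine ⟨Set.mem_insert_of_mem _ hR.bot_mem, ?_, ?_⟩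
  · rintro x (rfl | hx) y (rfl | hy)
    · rw [inf_idem]; exact Set.mem_insert _ _
    · exact hinf y hy
    · exact inf_comm (t, q) x ▸ hinf x hx
    · exact Set.mem_insert_of_mem _ (hR.inf_mem hx hy)
  · rintro x (rfl | hx) y (rfl | hy)
    exacts [iff_of_true le_rfl le_rfl, hge y hy, hle x hx, hR.le_iff hx hy]

theorem exists_least_fst_ge {S : Finset (α × β)} (hS : IsInfPartialIso (S : Set (α × β))) {t : α}
    (h : ∃ x ∈ S, t ≤ x.1) : ∃ u ∈ S, t ≤ u.1 ∧ ∀ x ∈ S, t ≤ x.1 → u ≤ x := by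
  classical
  have hne : (S.filter (t ≤ ·.1)).Nonempty := by simpa [Finset.Nonempty] using h
  have hsub : ∀ x ∈ S.filter (t ≤ ·.1), id x ∈ {x | x ∈ S ∧ t ≤ x.1} :=
    fun x hx => Finset.mem_filter.1 hx
  obtain ⟨hu, htu⟩ := Finset.inf'_mem {x | x ∈ S ∧ t ≤ x.1}
    (fun x hx y hy => ⟨hS.inf_mem hx.1 hy.1, le_inf hx.2 hy.2⟩) _ hne id hsub
  exact ⟨_, hu, htu, fun x hx htx => Finset.inf'_le id (Finset.mem_filter.2 ⟨hx, htx⟩)⟩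

section Forth

variable (hα : PseudotreeOrd α) (hβ : PseudotreeOrd β) (hsplit : InfSplitting β)
  (hdense : DenseOrd β)
include hα hβ hsplit hdense

theorem exists_insert {S : Finset (α × β)} (hS : IsInfPartialIso (S : Set (α × β))) {t : α}
    (ht : ∀ x ∈ S, t ≤ x.1 ∨ ∃ y ∈ S, y.1 = t ⊓ x.1) :
    ∃ q, IsInfPartialIso (Insert.insert (t, q) (S : Set (α × β))) := by
  classical
  by_cases htS : ∃ q, (t, q) ∈ S
  · obtain ⟨q, hq⟩ := htS
    exact ⟨q, by rwa [Set.insert_eq_of_mem hq]⟩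
  push Not at htS
  obtain ⟨m, hm, hmt, hmax⟩ := hα.exists_max_le Prod.fst S ⟨⊥, hS.bot_mem, bot_le⟩
  have hinf_t : ∀ x ∈ S, ¬t ≤ x.1 → t ⊓ x.1 = m.1 ⊓ x.1 := by
    intro x hx htx
    obtain ⟨y, hy, hyx⟩ := (ht x hx).resolve_left htx
    have hym : t ⊓ x.1 ≤ m.1 := hyx ▸ hmax y hy (hyx ▸ inf_le_left)
    exact le_antisymm (le_inf hym inf_le_right) (inf_le_inf_right _ hmt)
  by_cases hup : ∃ x ∈ S, t ≤ x.1
  · obtain ⟨u, hu, htu, hu_le⟩ := hS.exists_least_fst_ge hup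
    have hmu : m.2 < u.2 := by
      refine lt_of_le_of_ne ((hS.le_iff hm hu).1 (hmt.trans htu)) fun h => ?_
      have hum : u.1 ≤ m.1 := (hS.le_iff hu hm).2 h.ge
      exact htS m.2 (le_antisymm hmt (htu.trans hum) ▸ hm)
    obtain ⟨q, hmq, hqu⟩ := hdense m.2 u.2 hmu
    refine ⟨q, hS.insert hm hmt hmax hmq (fun x hx htx => ⟨hinf_t x hx htx, ?_⟩)
      fun x hx htx => hqu.trans_le (hu_le x hx htx).2⟩
    have hux : u.2 ⊓ x.2 ≤ m.2 := by
      have hux_t : (u ⊓ x).1 ≤ t :=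
        (hα u.1 t (u ⊓ x).1 htu inf_le_left).resolve_left
          fun h => htx (h.trans inf_le_right)
      exact (hS.le_iff (hS.inf_mem hu hx) hm).1 (hmax _ (hS.inf_mem hu hx) hux_t)
    exact le_antisymm (le_inf ((inf_le_inf_right _ hqu.le).trans hux) inf_le_right)
      (inf_le_inf_right _ hmq.le)
  · push Not at hup
    obtain ⟨q, hmq, hq⟩ := hβ.exists_gt_forall_inf_eq hsplit (S.image Prod.snd) m.2
    exact ⟨q, hS.insert hm hmt hmax hmq
      (fun x hx htx => ⟨hinf_t x hx htx, hq _ (Finset.mem_image_of_mem _ hx)⟩)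
      fun x hx htx => absurd htx (hup x hx)⟩

/-- Adding the missing meets `t ⊓ x` from the bottom up, each new point already has all of its
meets with the domain in the domain. -/
theorem exists_extend_fst {S : Finset (α × β)} (hS : IsInfPartialIso (S : Set (α × β))) (t : α) :
    ∃ S' : Finset (α × β), S ⊆ S' ∧ IsInfPartialIso (S' : Set (α × β)) ∧ ∃ b, (t, b) ∈ S' := by
  classical
  induction hn : (S.image (t ⊓ ·.1) \ S.image Prod.fst).card using Nat.strong_induction_on
    generalizing S with
  | _ n ih =>
    set M := S.image (t ⊓ ·.1) \ S.image Prod.fst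
    rcases M.eq_empty_or_nonempty with hM | hM
    · obtain ⟨q, hq⟩ := hS.exists_insert hα hβ hsplit hdense (t := t) fun x hx => by
        right
        by_contra h
        have : t ⊓ x.1 ∈ M := Finset.mem_sdiff.2
          ⟨Finset.mem_image_of_mem _ hx, by simpa [eq_comm] using h⟩
        exact Finset.eq_empty_iff_forall_notMem.1 hM _ this
      exact ⟨Insert.insert (t, q) S, Finset.subset_insert _ _, by rwa [Finset.coe_insert],
        q, Finset.mem_insert_self _ _⟩
    obtain ⟨c, hcM, hcmin⟩ := M.exists_minimal hM
    obtain ⟨hc_img, hc_dom⟩ := Finset.mem_sdiff.1 hcM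
    obtain ⟨x₀, hx₀, hc⟩ := Finset.mem_image.1 hc_img
    have hct : c ≤ t := hc ▸ inf_le_left
    obtain ⟨q, hq⟩ := hS.exists_insert hα hβ hsplit hdense (t := c) fun x hx => by
      by_cases h : ∃ y ∈ S, y.1 = c ⊓ x.1
      · exact Or.inr h
      left
      have hcx : c ⊓ x.1 ∈ M := Finset.mem_sdiff.2
        ⟨Finset.mem_image.2 ⟨x₀ ⊓ x, hS.inf_mem hx₀ hx, by rw [← hc, inf_assoc]; rfl⟩,
          by simpa [eq_comm] using h⟩
      exact (hcmin hcx inf_le_left).trans inf_le_right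
    have hM₁ : (Insert.insert (c, q) S).image (t ⊓ ·.1) \ (Insert.insert (c, q) S).image Prod.fst =
        M.erase c := by
      rw [Finset.image_insert, Finset.image_insert, inf_eq_right.2 hct, Finset.insert_sdiff_insert,
        Finset.sdiff_insert]
    obtain ⟨S', hS₁S', hS', hb⟩ := ih _ (hM₁ ▸ hn ▸ Finset.card_erase_lt_of_mem hcM)
      (by rwa [Finset.coe_insert]) rfl
    exact ⟨S', (Finset.subset_insert _ _).trans hS₁S', hS', hb⟩

end Forth

theorem image_swap [DecidableEq α] [DecidableEq β] {S : Finset (α × β)}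
    (hS : IsInfPartialIso (S : Set (α × β))) :
    IsInfPartialIso (S.image Prod.swap : Set (β × α)) := by
  rw [Finset.coe_image, Set.image_swap_eq_preimage_swap]
  exact hS.preimage_swap

theorem exists_extend_snd (hα : PseudotreeOrd α) (hβ : PseudotreeOrd β) (hsplit : InfSplitting α)
    (hdense : DenseOrd α) {S : Finset (α × β)} (hS : IsInfPartialIso (S : Set (α × β))) (b : β) :
    ∃ S' : Finset (α × β), S ⊆ S' ∧ IsInfPartialIso (S' : Set (α × β)) ∧ ∃ a, (a, b) ∈ S' := by
  classical
  obtain ⟨S', hSS', hS', a, ha⟩ := hS.image_swap.exists_extend_fst hβ hα hsplit hdense b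
  refine ⟨S'.image Prod.swap, fun x hx => ?_, hS'.image_swap, a, Finset.mem_image_of_mem _ ha⟩
  exact Finset.mem_image.2 ⟨x.swap, hSS' (Finset.mem_image_of_mem _ hx), x.swap_swap⟩

theorem exists_equiv {R : Set (α × β)} (hR : IsInfPartialIso R) (hfst : ∀ a, ∃ b, (a, b) ∈ R)
    (hsnd : ∀ b, ∃ a, (a, b) ∈ R) : ∃ e : α ≃ β, e ⊥ = ⊥ ∧ ∀ x y, e (x ⊓ y) = e x ⊓ e y := by
  choose f hf using hfst
  choose g hg using hsnd
  refine ⟨⟨f, g, fun a => hR.fst_eq (hg (f a)) (hf a), fun b => hR.snd_eq (hf (g b)) (hg b)⟩,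
    hR.snd_eq (hf ⊥) hR.bot_mem, fun x y => hR.snd_eq (hf (x ⊓ y)) (hR.inf_mem (hf x) (hf y))⟩

end IsInfPartialIso

open Order in
/-- The Rasiowa–Sikorski lemma for the preorder of finite partial isomorphisms, with one cofinal
set for each point that has to enter the domain or the range. -/
theorem exists_isInfPartialIso_of_extend {α β : Type*} [SemilatticeInf α] [OrderBot α]
    [Countable α] [SemilatticeInf β] [OrderBot β] [Countable β]
    (hfst : ∀ S : Finset (α × β), IsInfPartialIso (S : Set (α × β)) → ∀ a, ∃ S' : Finset (α × β),
      S ⊆ S' ∧ IsInfPartialIso (S' : Set (α × β)) ∧ ∃ b, (a, b) ∈ S')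
    (hsnd : ∀ S : Finset (α × β), IsInfPartialIso (S : Set (α × β)) → ∀ b, ∃ S' : Finset (α × β),
      S ⊆ S' ∧ IsInfPartialIso (S' : Set (α × β)) ∧ ∃ a, (a, b) ∈ S') :
    ∃ R : Set (α × β), IsInfPartialIso R ∧ (∀ a, ∃ b, (a, b) ∈ R) ∧ ∀ b, ∃ a, (a, b) ∈ R := by
  obtain ⟨_⟩ := nonempty_encodable (α ⊕ β)
  let P := {S : Finset (α × β) // IsInfPartialIso (S : Set (α × β))}
  let 𝒟 : α ⊕ β → Cofinal P := Sum.elim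
    (fun a => ⟨{S | ∃ b, (a, b) ∈ S.1}, fun S => by
      obtain ⟨S', hSS', hS', hS'a⟩ := hfst S.1 S.2 a
      exact ⟨⟨S', hS'⟩, hS'a, hSS'⟩⟩)
    (fun b => ⟨{S | ∃ a, (a, b) ∈ S.1}, fun S => by
      obtain ⟨S', hSS', hS', hS'b⟩ := hsnd S.1 S.2 b
      exact ⟨⟨S', hS'⟩, hS'b, hSS'⟩⟩)
  let I := idealOfCofinals (⟨{⊥}, by simpa using IsInfPartialIso.singleton_bot⟩ : P) 𝒟
  refine ⟨⋃₀ ((fun S : P => (S.1 : Set (α × β))) '' I), IsInfPartialIso.sUnion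
    (I.nonempty.image _) (I.directed.mono_comp fun _ _ => Finset.coe_subset.2) ?_,
    fun a => ?_, fun b => ?_⟩
  · rintro _ ⟨S, -, rfl⟩
    exact S.2
  · obtain ⟨S, ⟨b, hb⟩, hS⟩ := cofinal_meets_idealOfCofinals _ 𝒟 (Sum.inl a)
    exact ⟨b, _, ⟨S, hS, rfl⟩, hb⟩
  · obtain ⟨S, ⟨a, ha⟩, hS⟩ := cofinal_meets_idealOfCofinals _ 𝒟 (Sum.inr b)
    exact ⟨a, _, ⟨S, hS, rfl⟩, ha⟩

/-- any two countable models of DPM are isomorphic. -/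
theorem stmt11 {T Q : Type*} [SemilatticeInf T] [OrderBot T] [Countable T]
    [SemilatticeInf Q] [OrderBot Q] [Countable Q]
    (hT : PseudotreeOrd T) (hsplitT : InfSplitting T) (hdenseT : DenseOrd T)
    (hQ : PseudotreeOrd Q) (hsplitQ : InfSplitting Q) (hdenseQ : DenseOrd Q) :
    ∃ e : T ≃ Q, e ⊥ = ⊥ ∧ ∀ x y : T, e (x ⊓ y) = e x ⊓ e y := by
  obtain ⟨R, hR, hfst, hsnd⟩ := exists_isInfPartialIso_of_extend
    (fun _ hS a => hS.exists_extend_fst hT hQ hsplitQ hdenseQ a)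
    (fun _ hS b => hS.exists_extend_snd hT hQ hsplitT hdenseT b)
  exact hR.exists_equiv hfst hsnd
end

section
/- Every pseudotree is a substructure of a model of PM. Concretely, if T is a pseudotree, then the collection T* consisting of all down-sets S_t = { x ∈ T : x ≤ t } for t ∈ T, together with all pairwise intersections S_{t0} ∩ S_{t1} and the empty set, ordered by inclusion, is closed under finite intersections and is a pseudotree with least element in which every two elements have an infimum (given by intersection). -/
/-!
Every member of `T*` is `∅` or an intersection `S_a ∩ S_b`, hence a down-set. Two down-sets
inside a common `S_t` are comparable, because the elements of `S_t` are. Applied inside `S_a`,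
this gives `S_a ∩ S_b ∩ S_c ∈ {S_a ∩ S_b, S_a ∩ S_c}`, so intersecting with further `S_c`'s
never leaves the pairwise intersections, and `T*` is closed under `∩`.
-/

open Set

namespace PseudotreeOrd

variable {T : Type*} [PartialOrder T]

theorem subset_total_of_isLowerSet (hT : PseudotreeOrd T) {t : T} {u v : Set T}
    (hu : IsLowerSet u) (hv : IsLowerSet v) (hut : u ⊆ Iic t) (hvt : v ⊆ Iic t) :
    u ⊆ v ∨ v ⊆ u := by
  refine or_iff_not_imp_left.mpr fun huv => ?_
  obtain ⟨a, hau, hav⟩ := not_subset.mp huv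
  intro b hbv
  rcases hT t a b (hut hau) (hvt hbv) with hab | hba
  · exact absurd (hv hab hbv) hav
  · exact hu hba hau

theorem exists_Iic_inter_Iic_eq_inter_Iic (hT : PseudotreeOrd T) (a b c : T) :
    ∃ p q : T, Iic a ∩ Iic b ∩ Iic c = Iic p ∩ Iic q := by
  have hsplit : Iic a ∩ Iic b ∩ Iic c = (Iic a ∩ Iic b) ∩ (Iic a ∩ Iic c) := by
    ext x; simp only [mem_inter_iff, mem_Iic]; tauto
  rcases hT.subset_total_of_isLowerSet (isLowerSet_Iic a |>.inter (isLowerSet_Iic b))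
      (isLowerSet_Iic a |>.inter (isLowerSet_Iic c)) inter_subset_left inter_subset_left
    with h | h
  · exact ⟨a, b, hsplit.trans (inter_eq_left.mpr h)⟩
  · exact ⟨a, c, hsplit.trans (inter_eq_right.mpr h)⟩

end PseudotreeOrd

/-- The family `T*`; each `S_t = S_t ∩ S_t` is already a pairwise intersection. -/
def downSetsStar (T : Type*) [Preorder T] : Set (Set T) :=
  insert ∅ {s | ∃ a b : T, s = Iic a ∩ Iic b}

namespace downSetsStar

variable {T : Type*} [PartialOrder T]

theorem Iic_mem (t : T) : Iic t ∈ downSetsStar T :=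
  mem_insert_of_mem _ ⟨t, t, (inter_self _).symm⟩

theorem isLowerSet {s : Set T} (hs : s ∈ downSetsStar T) : IsLowerSet s := by
  rcases hs with rfl | ⟨a, b, rfl⟩
  · exact isLowerSet_empty
  · exact (isLowerSet_Iic a).inter (isLowerSet_Iic b)

theorem inter_Iic_mem (hT : PseudotreeOrd T) {s : Set T} (hs : s ∈ downSetsStar T) (c : T) :
    s ∩ Iic c ∈ downSetsStar T := by
  rcases hs with rfl | ⟨a, b, rfl⟩
  · rw [empty_inter]; exact mem_insert _ _
  · obtain ⟨p, q, h⟩ := hT.exists_Iic_inter_Iic_eq_inter_Iic a b c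
    exact mem_insert_of_mem _ ⟨p, q, h⟩

theorem inter_mem (hT : PseudotreeOrd T) {s u : Set T} (hs : s ∈ downSetsStar T)
    (hu : u ∈ downSetsStar T) : s ∩ u ∈ downSetsStar T := by
  rcases hu with rfl | ⟨c, d, rfl⟩
  · rw [inter_empty]; exact mem_insert _ _
  · rw [← inter_assoc]
    exact inter_Iic_mem hT (inter_Iic_mem hT hs c) d

theorem subset_total (hT : PseudotreeOrd T) {s u v : Set T} (hs : s ∈ downSetsStar T)
    (hu : u ∈ downSetsStar T) (hv : v ∈ downSetsStar T) (hus : u ⊆ s) (hvs : v ⊆ s) :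
    u ⊆ v ∨ v ⊆ u := by
  rcases hs with rfl | ⟨a, b, rfl⟩
  · exact Or.inl ((subset_empty_iff.mp hus).symm ▸ empty_subset v)
  · exact hT.subset_total_of_isLowerSet (isLowerSet hu) (isLowerSet hv)
      (hus.trans inter_subset_left) (hvs.trans inter_subset_left)

end downSetsStar

/-- every pseudotree is a substructure of a model of PM: the collection
`T*` of down-sets `S_t`, pairwise intersections thereof, and `∅`, ordered by inclusion, is
closed under finite intersections and is a pseudotree with least element in which every two
elements have an infimum, given by intersection; `T` embeds via `t ↦ S_t`. -/
theorem stmt12 {T : Type*} [PartialOrder T] (hT : PseudotreeOrd T) :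
    ∀ Tstar : Set (Set T),
      Tstar = {s | ∃ t : T, s = Set.Iic t} ∪
          {s | ∃ t u : T, s = Set.Iic t ∩ Set.Iic u} ∪ {∅} →
      (∀ s ∈ Tstar, ∀ u ∈ Tstar, s ∩ u ∈ Tstar) ∧
      (∅ ∈ Tstar ∧ ∀ s ∈ Tstar, ∅ ⊆ s) ∧
      (∀ s ∈ Tstar, ∀ u ∈ Tstar, ∀ v ∈ Tstar, u ⊆ s → v ⊆ s → u ⊆ v ∨ v ⊆ u) ∧
      (∀ s ∈ Tstar, ∀ u ∈ Tstar, s ∩ u ⊆ s ∧ s ∩ u ⊆ u ∧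
        ∀ w ∈ Tstar, w ⊆ s → w ⊆ u → w ⊆ s ∩ u) ∧
      (∀ t : T, Set.Iic t ∈ Tstar) ∧
      (∀ t u : T, t ≤ u ↔ Set.Iic t ⊆ Set.Iic u) ∧
      Function.Injective (Set.Iic : T → Set T) := by
  rintro Tstar rfl
  have hstar : {s | ∃ t : T, s = Iic t} ∪ {s | ∃ t u : T, s = Iic t ∩ Iic u} ∪ {∅} =
      downSetsStar T := by
    ext s
    simp only [downSetsStar, mem_union, mem_ofPred_eq, mem_singleton_iff, mem_insert_iff]
    constructor
    · rintro ((⟨t, rfl⟩ | h) | h)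
      exacts [Or.inr ⟨t, t, (inter_self _).symm⟩, Or.inr h, Or.inl h]
    · rintro (h | h)
      exacts [Or.inr h, Or.inl (Or.inr h)]
  rw [hstar]
  exact ⟨fun s hs u hu => downSetsStar.inter_mem hT hs hu,
    ⟨mem_insert _ _, fun s _ => empty_subset s⟩,
    fun s hs u hu v hv => downSetsStar.subset_total hT hs hu hv,
    fun s _ u _ => ⟨inter_subset_left, inter_subset_right, fun _ _ => subset_inter⟩,
    downSetsStar.Iic_mem,
    fun _ _ => Iic_subset_Iic.symm,
    Iic_injective⟩
end

section
/- Every countable pseudotree embeds into T_ℚ. -/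
def restrictIic (a : ℚ) (g : ℚ → ℕ) : ℚ → Option ℕ :=
  fun r => if r ≤ a then some (g r) else none

theorem restrictIic_mem_TQ {a : ℚ} {g : ℚ → ℕ} {N : ℕ} (hN : ∀ r ≤ a, g r ≤ N)
    (hsub : ∀ r ≤ a, ∃ q ≤ a, ∀ s ≤ a, g s ≤ g r ↔ s ≤ q) : restrictIic a g ∈ TQ := by
  classical
  set B : Finset ℕ := (Finset.range (N + 1)).filter fun c => ∃ r ≤ a, g r = c
  have mem_B : ∀ r ≤ a, g r ∈ B := fun r hr =>
    Finset.mem_filter.2 ⟨Finset.mem_range.2 (Nat.lt_succ_of_le (hN r hr)), r, hr, rfl⟩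
  obtain ⟨m, hm⟩ : ∃ m, B.card = m + 1 :=
    Nat.exists_eq_succ_of_ne_zero (Finset.card_ne_zero.2 ⟨_, mem_B a le_rfl⟩)
  -- `c` lists the attained values in increasing order; `q i` is the right end of
  -- the sublevel set of `c i`.
  set c := B.orderEmbOfFin hm
  have exists_c_eq : ∀ r ≤ a, ∃ i, c i = g r := fun r hr => by
    simpa [c, ← Set.mem_range, Finset.range_orderEmbOfFin] using mem_B r hr
  have exists_eq_c : ∀ i, ∃ r ≤ a, g r = c i := fun i =>
    (Finset.mem_filter.1 (B.orderEmbOfFin_mem hm i)).2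
  have sublevel : ∀ i, ∃ q ≤ a, ∀ s ≤ a, g s ≤ c i ↔ s ≤ q := fun i => by
    obtain ⟨r, hr, hrc⟩ := exists_eq_c i
    simpa only [hrc] using hsub r hr
  choose q hqa hq using sublevel
  have q_strictMono : StrictMono q := by
    intro i j hij
    have hc : c i < c j := c.strictMono hij
    refine lt_of_le_of_ne ((hq j _ (hqa i)).1 ?_) fun hq_eq => ?_
    · exact ((hq i _ (hqa i)).2 le_rfl).trans hc.le
    · obtain ⟨r, hr, hrc⟩ := exists_eq_c j
      have : g r ≤ c i := (hq i r hr).2 (hq_eq ▸ (hq j r hr).1 hrc.le)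
      omega
  have q_last : q (Fin.last m) = a := by
    obtain ⟨i, hi⟩ := exists_c_eq a le_rfl
    exact le_antisymm (hqa _) ((hq _ a le_rfl).1 (hi ▸ c.monotone (Fin.le_last i)))
  refine Or.inr ⟨m, q, c, q_strictMono, fun r => ?_, fun r hr => ?_, fun i r hlt hle => ?_⟩
  · simp [restrictIic, q_last]
  · have hra : r ≤ a := hr.trans (hqa 0)
    obtain ⟨j, hj⟩ := exists_c_eq r hra
    have : g r ≤ c 0 := (hq 0 r hra).2 hr
    have : c 0 ≤ c j := c.monotone (Fin.zero_le j)
    simp only [restrictIic, if_pos hra, Option.some.injEq]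
    omega
  · have hra : r ≤ a := hle.trans (hqa _)
    obtain ⟨j, hj⟩ := exists_c_eq r hra
    have hj_le : j ≤ i.succ := c.le_iff_le.1 (hj ▸ (hq _ r hra).2 hle)
    have hj_gt : i.castSucc < j :=
      c.lt_iff_lt.1 (hj ▸ lt_of_not_ge fun h => hlt.not_ge ((hq _ r hra).1 h))
    rw [restrictIic, if_pos hra, ← hj, le_antisymm hj_le (Fin.castSucc_lt_iff_succ_le.1 hj_gt)]

noncomputable def firstHit (h : ℕ → ℚ) (r : ℚ) : ℕ := sInf {n | r ≤ h n}

theorem le_firstHit_apply {h : ℕ → ℚ} {r : ℚ} (hr : ∃ n, r ≤ h n) : r ≤ h (firstHit h r) :=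
  Nat.sInf_mem hr

theorem firstHit_le_iff {h : ℕ → ℚ} {r : ℚ} (hr : ∃ n, r ≤ h n) {c : ℕ} :
    firstHit h r ≤ c ↔ ∃ n ≤ c, r ≤ h n :=
  ⟨fun hc => ⟨_, hc, le_firstHit_apply hr⟩, fun ⟨_, hn, hrn⟩ => (Nat.sInf_le hrn).trans hn⟩

theorem restrictIic_firstHit_mem_TQ {h : ℕ → ℚ} {a : ℚ} {N : ℕ} (hN : a ≤ h N) :
    restrictIic a (firstHit h) ∈ TQ := by
  have hit : ∀ r ≤ a, ∃ n, r ≤ h n := fun r hr => ⟨N, hr.trans hN⟩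
  refine restrictIic_mem_TQ (N := N) (fun r hr => Nat.sInf_le (hr.trans hN)) fun r _ => ?_
  refine ⟨min a ((Finset.range (firstHit h r + 1)).sup' Finset.nonempty_range_add_one h),
    min_le_left _ _, fun s hs => ?_⟩
  simp [firstHit_le_iff (hit s hs), hs, Finset.le_sup'_iff]

theorem PseudotreeOrd.inf_eq_left_or_inf_eq_inf {P : Type*} [SemilatticeInf P]
    (hP : PseudotreeOrd P) {x y : P} (hxy : x ≤ y) (z : P) : x ⊓ z = x ∨ x ⊓ z = y ⊓ z := by
  rcases hP y x (y ⊓ z) hxy inf_le_left with h | h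
  · exact Or.inl (inf_eq_left.2 (h.trans inf_le_right))
  · exact Or.inr (le_antisymm (inf_le_inf_right z hxy) (le_inf h inf_le_right))

theorem StrictMono.eq_of_le_of_apply_le {α β : Type*} [PartialOrder α] [Preorder β] {f : α → β}
    (hf : StrictMono f) {a b : α} (hab : a ≤ b) (hba : f b ≤ f a) : a = b :=
  hab.eq_or_lt.resolve_right fun h => (hf h).not_ge hba

theorem exists_strictMono_rat (α : Type*) [PartialOrder α] [Countable α] :
    ∃ ε : α → ℚ, StrictMono ε := by
  have : Countable (LinearExtension α) := inferInstanceAs (Countable α)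
  obtain ⟨e⟩ := Order.embedding_from_countable_to_dense (LinearExtension α) ℚ
  exact ⟨e ∘ toLinearExtension, fun x y hxy =>
    e.strictMono (lt_of_le_of_ne (toLinearExtension.monotone hxy.le) hxy.ne)⟩

section TreeCode

variable {P : Type*} [SemilatticeInf P] {u : ℕ → P} {ε : P → ℚ}

noncomputable def treeCode (u : ℕ → P) (ε : P → ℚ) (x : P) : ℚ → Option ℕ :=
  restrictIic (ε x) (firstHit fun n => ε (x ⊓ u n))

theorem treeCode_mem_TQ (hu : Function.Surjective u) (x : P) : treeCode u ε x ∈ TQ := by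
  obtain ⟨N, hN⟩ := hu x
  exact restrictIic_firstHit_mem_TQ (N := N) (by rw [hN, inf_idem])

theorem firstHit_inf_eq_of_le (hP : PseudotreeOrd P) (hε : Monotone ε) {x y : P} (hxy : x ≤ y)
    {r : ℚ} (hr : r ≤ ε x) :
    firstHit (fun n => ε (y ⊓ u n)) r = firstHit (fun n => ε (x ⊓ u n)) r := by
  refine congrArg sInf (Set.ext fun n => ?_)
  change r ≤ ε (y ⊓ u n) ↔ r ≤ ε (x ⊓ u n)
  rcases hP.inf_eq_left_or_inf_eq_inf hxy (u n) with h | h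
  · rw [h]
    exact iff_of_true (hr.trans (hε (le_inf hxy (h ▸ inf_le_right)))) hr
  · rw [h]

theorem treeCode_le_treeCode (hP : PseudotreeOrd P) (hε : Monotone ε) {x y : P} (hxy : x ≤ y) :
    TQle (treeCode u ε x) (treeCode u ε y) := by
  intro r m hm
  simp only [treeCode, restrictIic] at hm ⊢
  split_ifs at hm with hr
  rw [if_pos (hr.trans (hε hxy)), firstHit_inf_eq_of_le hP hε hxy hr, hm]

theorem le_of_treeCode_le (hP : PseudotreeOrd P) (hu : Function.Surjective u)
    (hε : StrictMono ε) {x y : P} (h : TQle (treeCode u ε x) (treeCode u ε y)) : x ≤ y := by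
  have hit : ∀ z, ε x ≤ ε z → ∃ n, ε x ≤ ε (z ⊓ u n) := fun z hz => by
    obtain ⟨N, hN⟩ := hu z
    exact ⟨N, by rwa [hN, inf_idem]⟩
  set n := firstHit (fun n => ε (x ⊓ u n)) (ε x)
  have hy := h (ε x) n (by simp [treeCode, restrictIic, n])
  simp only [treeCode, restrictIic] at hy
  split_ifs at hy with hxy
  have hyn : ε x ≤ ε (y ⊓ u n) := Option.some.inj hy ▸ le_firstHit_apply (hit y hxy)
  have hxn : x ≤ u n := inf_eq_left.1 <|
    hε.eq_of_le_of_apply_le inf_le_left (le_firstHit_apply (hit x le_rfl))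
  rcases hP (u n) x (y ⊓ u n) hxn inf_le_right with h | h
  · exact h.trans inf_le_left
  · exact hε.eq_of_le_of_apply_le h hyn ▸ inf_le_left

theorem PseudotreeOrd.exists_embedding_TQ [Countable P] (hP : PseudotreeOrd P) :
    ∃ π : P → ↥TQ, ∀ x y, x ≤ y ↔ TQle (π x).1 (π y).1 := by
  cases isEmpty_or_nonempty P
  · exact ⟨isEmptyElim, isEmptyElim⟩
  obtain ⟨u, hu⟩ := exists_surjective_nat P
  obtain ⟨ε, hε⟩ := exists_strictMono_rat P
  exact ⟨fun x => ⟨treeCode u ε x, treeCode_mem_TQ hu x⟩, fun x y =>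
    ⟨treeCode_le_treeCode hP hε.monotone, le_of_treeCode_le hP hu hε⟩⟩

end TreeCode

section LowerBoundSets

variable {T : Type*} [Preorder T]

def lowerBoundSets (T : Type*) [Preorder T] : Set (Set T) :=
  {S | ∃ F : Finset T, F.Nonempty ∧ S = lowerBounds ↑F}

theorem inter_mem_lowerBoundSets {A B : Set T} (hA : A ∈ lowerBoundSets T)
    (hB : B ∈ lowerBoundSets T) : A ∩ B ∈ lowerBoundSets T := by
  classical
  obtain ⟨F, hF, rfl⟩ := hA
  obtain ⟨G, -, rfl⟩ := hB
  exact ⟨F ∪ G, hF.mono Finset.subset_union_left, by rw [Finset.coe_union, lowerBounds_union]⟩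

theorem isLowerSet_of_mem_lowerBoundSets {S : Set T} (hS : S ∈ lowerBoundSets T) :
    IsLowerSet S := by
  obtain ⟨F, -, rfl⟩ := hS
  exact fun _ _ hba ha _ hc => hba.trans (ha hc)

theorem Iic_mem_lowerBoundSets (t : T) : Set.Iic t ∈ lowerBoundSets T :=
  ⟨{t}, Finset.singleton_nonempty t, by simp⟩

instance : SemilatticeInf (lowerBoundSets T) :=
  Subtype.semilatticeInf fun _ _ => inter_mem_lowerBoundSets

instance [Countable T] : Countable (lowerBoundSets T) := by
  refine Set.Countable.to_subtype ((Set.countable_range fun F : Finset T => lowerBounds ↑F).mono ?_)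
  rintro S ⟨F, -, rfl⟩
  exact ⟨F, rfl⟩

theorem PseudotreeOrd.lowerBoundSets (hT : PseudotreeOrd T) :
    PseudotreeOrd (lowerBoundSets T) := by
  rintro ⟨W, F, ⟨w, hw⟩, rfl⟩ ⟨A, hA⟩ ⟨B, hB⟩ (hAW : A ⊆ _) (hBW : B ⊆ _)
  by_contra! h
  obtain ⟨x, hxA, hxB⟩ := Set.not_subset.1 fun hAB => h.1 hAB
  obtain ⟨y, hyB, hyA⟩ := Set.not_subset.1 fun hBA => h.2 hBA
  rcases hT w x y (hAW hxA hw) (hBW hyB hw) with hxy | hyx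
  · exact hxB (isLowerSet_of_mem_lowerBoundSets hB hxy hyB)
  · exact hyA (isLowerSet_of_mem_lowerBoundSets hA hyx hxA)

end LowerBoundSets

/-- every countable pseudotree embeds into `T_ℚ`. -/
theorem stmt14 {T : Type*} [PartialOrder T] [Countable T] (hT : PseudotreeOrd T) :
    ∃ π : T → ↥TQ, Function.Injective π ∧
      ∀ a b : T, a ≤ b ↔ TQle (π a).1 (π b).1 := by
  obtain ⟨π, hπ⟩ := hT.lowerBoundSets.exists_embedding_TQ
  let ι : T → lowerBoundSets T := fun t => ⟨Set.Iic t, Iic_mem_lowerBoundSets t⟩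
  have hι : ∀ a b, a ≤ b ↔ ι a ≤ ι b := fun a b => Set.Iic_subset_Iic.symm
  have hπι : ∀ a b, a ≤ b ↔ TQle (π (ι a)).1 (π (ι b)).1 := fun a b => (hι a b).trans (hπ _ _)
  refine ⟨π ∘ ι, fun a b (hab : π (ι a) = π (ι b)) => le_antisymm ?_ ?_, hπι⟩
  · exact (hπι a b).2 (by rw [hab]; exact fun _ _ => id)
  · exact (hπι b a).2 (by rw [hab]; exact fun _ _ => id)
end

section
/- Let S be a sequential tree in a model N (of ZF− with standard ω) with internal rank function ρ_S satisfying ρ_S(t) = sup_{s<t}(ρ_S(s)+1). If p ∈ S has internally limit, externally ill-founded rank, then p has infinitely many immediate successors in S, and among the immediate successors q of p there are at least two incomparable nodes whose ranks ρ_S(q) are ill-founded. -/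
open FirstOrder FirstOrder.Language

/-- The language of set theory: one binary relation symbol. -/
def ZFLang : FirstOrder.Language :=
  ⟨fun _ => Empty, fun n => match n with | 2 => Unit | _ => Empty⟩

def memRel : ZFLang.Relations 2 := ()

/-- The membership structure on a class of ZF-sets. -/
noncomputable instance zfStr (M : Set ZFSet) : ZFLang.Structure ↥M where
  funMap {n} f _ := f.elim
  RelMap {n} r v :=
    match n, r, v with
    | 2, _, v => ((v 0 : ↥M) : ZFSet) ∈ ((v 1 : ↥M) : ZFSet)
    | 0, r, _ => r.elim
    | 1, r, _ => r.elim
    | (_+3), r, _ => r.elim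

/-- The formula `x ∈ y`. -/
def mem' {n : ℕ} (x y : Fin n) : ZFLang.BoundedFormula Empty n :=
  Relations.boundedFormula₂ memRel (Term.var (Sum.inr x)) (Term.var (Sum.inr y))

/-- The formula `x = y`. -/
def eq' {n : ℕ} (x y : Fin n) : ZFLang.BoundedFormula Empty n :=
  Term.bdEqual (Term.var (Sum.inr x)) (Term.var (Sum.inr y))

def extAx : ZFLang.Sentence :=
  ∀' ∀' ((∀' (mem' 2 0 ⇔ mem' 2 1)) ⟹ eq' 0 1)

def pairAx : ZFLang.Sentence :=
  ∀' ∀' ∃' ∀' (mem' 3 2 ⇔ (eq' 3 0 ⊔ eq' 3 1))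

def unionAx : ZFLang.Sentence :=
  ∀' ∃' ∀' (mem' 2 1 ⇔ ∃' (mem' 3 0 ⊓ mem' 2 3))

def powerAx : ZFLang.Sentence :=
  ∀' ∃' ∀' (mem' 2 1 ⇔ ∀' (mem' 3 2 ⟹ mem' 3 0))

def infAx : ZFLang.Sentence :=
  ∃' ((∃' (mem' 1 0 ⊓ ∀' (∼(mem' 2 1)))) ⊓
    (∀' (mem' 1 0 ⟹ ∃' (mem' 2 0 ⊓ ∀' (mem' 3 2 ⇔ (mem' 3 1 ⊔ eq' 3 1))))))

def foundAx : ZFLang.Sentence :=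
  ∀' ((∃' (mem' 1 0)) ⟹ ∃' (mem' 1 0 ⊓ ∀' (mem' 2 1 ⟹ ∼(mem' 2 0))))

/-- The separation axiom for a formula with `k` parameters. -/
def sepAx {k : ℕ} (φ : ZFLang.BoundedFormula Empty (k + 1)) : ZFLang.Sentence :=
  (mem' ⟨k+2, by omega⟩ ⟨k+1, by omega⟩ ⇔
      (mem' ⟨k+2, by omega⟩ ⟨k, by omega⟩ ⊓ φ.liftAt 2 k)).all.ex.all.alls

/-- The collection axiom for a formula with `k` parameters. -/
def collAx {k : ℕ} (φ : ZFLang.BoundedFormula Empty (k + 2)) : ZFLang.Sentence :=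
  (mem' ⟨k+2, by omega⟩ ⟨k, by omega⟩ ⟹
      ((φ.liftAt 2 k).ex ⟹
        ((mem' ⟨k+3, by omega⟩ ⟨k+1, by omega⟩ ⊓ φ.liftAt 2 k).ex))).all.ex.all.alls

def choiceAx : ZFLang.Sentence :=
  (((∀' ((mem' 1 0) ⟹ (∃' (mem' 2 1)))) ⊓
    (∀' ∀' ((((mem' 1 0) ⊓ (mem' 2 0)) ⊓ (∼(eq' 1 2))) ⟹ (∀' (∼((mem' 3 1) ⊓ (mem' 3 2)))))))
   ⟹
   (∃' ∀' ((mem' 2 0) ⟹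
      (∃' (((mem' 3 2) ⊓ (mem' 3 1)) ⊓
        (∀' (((mem' 4 2) ⊓ (mem' 4 1)) ⟹ (eq' 4 3)))))))).all

/-- The ZFC axioms: extensionality, pairing, union, powerset, infinity, foundation, choice,
separation, and collection. -/
def ZFCTheory : ZFLang.Theory :=
  {extAx, pairAx, unionAx, powerAx, infAx, foundAx, choiceAx} ∪
    (⋃ (k : ℕ), Set.range (@sepAx k)) ∪ (⋃ (k : ℕ), Set.range (@collAx k))

/-- A class of ZF-sets is transitive. -/
def SetTransitive (M : Set ZFSet) : Prop := ∀ x ∈ M, ∀ y : ZFSet, y ∈ x → y ∈ M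

/-- A transitive model of ZFC. -/
def IsZFCModel (M : Set ZFSet) : Prop := SetTransitive M ∧ ZFCTheory.Model ↥M

/-- Two classes have the same ordinals. -/
def SameOrdinals (M N : Set ZFSet) : Prop :=
  ∀ x : ZFSet, x.IsOrdinal → (x ∈ M ↔ x ∈ N)

/-- `z` is the pointwise image `j[x]` of `x` under `j`. -/
def ImageSet (M N : Set ZFSet) (j : ↥M → ↥N) (x z : ZFSet) : Prop :=
  ∀ w : ZFSet, w ∈ z ↔ ∃ y : ↥M, (y : ZFSet) ∈ x ∧ ((j y : ↥N) : ZFSet) = w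

/-- `j : M → N` is amenable: every pointwise image `j[x]`, `x ∈ M`, belongs to `N`. -/
def Amenable (M N : Set ZFSet) (j : ↥M → ↥N) : Prop :=
  ∀ x ∈ M, ∃ z ∈ N, ImageSet M N j x z

/-- `κ` is the critical point of `j`: the least ordinal moved. -/
def IsCrit (M N : Set ZFSet) (j : ↥M → ↥N) (κ : ZFSet) : Prop :=
  κ.IsOrdinal ∧ ∃ h : κ ∈ M, ((j ⟨κ, h⟩ : ↥N) : ZFSet) ≠ κ ∧
    ∀ β : ZFSet, β ∈ κ → ∀ hb : β ∈ M, ((j ⟨β, hb⟩ : ↥N) : ZFSet) = β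

/-- `f` is a cofinal map from `β` into the ordinal `α`. -/
def CofinalIn (β α f : ZFSet) : Prop :=
  ∀ γ, γ ∈ α → ∃ ξ, ξ ∈ β ∧ ∃ η, ξ.pair η ∈ f ∧ (γ ∈ η ∨ γ = η)

/-- `α` is a regular ordinal from the point of view of the class `M`. -/
def RegularIn (M : Set ZFSet) (α : ZFSet) : Prop :=
  ∀ β, β ∈ α → ∀ f, f ∈ M → ZFSet.IsFunc β α f → ¬ CofinalIn β α f

/-- The theory ZF minus Powerset (extensionality, pairing, union, infinity, foundation,
separation, collection). -/
def ZFminusP : ZFLang.Theory :=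
  {extAx, pairAx, unionAx, infAx, foundAx} ∪
    (⋃ (k : ℕ), Set.range (@sepAx k)) ∪ (⋃ (k : ℕ), Set.range (@collAx k))

section IllFounded
variable {W : Type*} [ZFLang.Structure W]

/-- The membership relation of a model of set theory. -/
def E (x y : W) : Prop := Structure.RelMap memRel ![x, y]

/-- `x` is an ordinal of the model: transitive and linearly ordered by `E`. -/
def IsOrdW (x : W) : Prop :=
  (∀ y : W, E y x → ∀ z : W, E z y → E z x) ∧
    ∀ y z : W, E y x → E z x → (E y z ∨ y = z ∨ E z y)

/-- The predecessors of `α` are (externally) well-founded. -/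
def WfBelow (α : W) : Prop := {y : W | E y α}.WellFoundedOn (fun a b : W => E a b)

/-- `n` is an internal natural number. -/
def IsNatW (n : W) : Prop :=
  IsOrdW n ∧ ∀ m : W, (E m n ∨ m = n) →
    ((¬ ∃ p : W, E p m) ∨ ∃ p : W, E p m ∧ ∀ q : W, E q m ↔ (E q p ∨ q = p))

/-- The model has standard `ω`: internal naturals have finitely many predecessors. -/
def StdOmega (W : Type*) [ZFLang.Structure W] : Prop :=
  ∀ n : W, IsNatW n → {y : W | E y n}.Finite

/-- `i` is the purely ill-founded part `i(α)` of the Cantor normal form decomposition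
`α = i(α) + w(α)`: the interval `[i, α)` is externally well-founded (so `w(α)` is in the
well-founded part), while every proper final segment of `i` is ill-founded (so `i` has no
Cantor normal form term with exponent in the well-founded part). -/
def SplitsAt (α i : W) : Prop :=
  IsOrdW i ∧ (E i α ∨ i = α) ∧
    ({y : W | (E i y ∨ i = y) ∧ E y α}.WellFoundedOn (fun a b : W => E a b)) ∧
    ((¬ ∃ y : W, E y i) ∨
      ∀ β : W, E β i →
        ¬ ({y : W | (E β y ∨ β = y) ∧ E y i}.WellFoundedOn (fun a b : W => E a b)))

end IllFounded

/-! The ranks of the children of `p` are cofinal in the limit `ρ p` (a node's rank is the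
supremum of its children's ranks plus one), so no child has maximal rank and `p` has infinitely
many children. Since there is no least ill-founded ordinal, some ill-founded `β` lies below `ρ p`;
a child `c₁` with `β < ρ c₁` has ill-founded rank, and so does any child `c₂` with
`ρ c₁ < ρ c₂`, which exists by cofinality again; `c₁ ≠ c₂` as Foundation makes `∈`
irreflexive. -/

theorem Set.Finite.exists_forall_not_rel {α : Type*} {r : α → α → Prop} {A : Set α}
    (hA : A.Finite) (hne : A.Nonempty)
    (htrans : ∀ a ∈ A, ∀ b ∈ A, ∀ c ∈ A, r a b → r b c → r a c) (hirrefl : ∀ a ∈ A, ¬ r a a) :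
    ∃ b ∈ A, ∀ a ∈ A, ¬ r b a := by
  have : Finite A := hA.to_subtype
  let r' : A → A → Prop := fun a b => r b a
  have : IsTrans A r' := ⟨fun a b c hab hbc => htrans _ c.2 _ b.2 _ a.2 hbc hab⟩
  have : Std.Irrefl r' := ⟨fun a => hirrefl a a.2⟩
  obtain ⟨b, -, hb⟩ := (Finite.wellFounded_of_trans_of_irrefl r').has_min Set.univ
    ⟨⟨_, hne.some_mem⟩, trivial⟩
  exact ⟨b, b.2, fun a ha hba => hb ⟨a, ha⟩ trivial hba⟩

theorem List.IsPrefix.exists_append_singleton_isPrefix {α : Type*} {p s : List α}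
    (h : p <+: s) (hne : p ≠ s) : ∃ m, p ++ [m] <+: s := by
  obtain ⟨_ | ⟨m, t⟩, rfl⟩ := h
  · simp at hne
  · exact ⟨m, t, by simp⟩

section Model

variable {W : Type*} [ZFLang.Structure W]

theorem exists_pair_of_realize_pairAx (h : W ⊨ pairAx) (a b : W) :
    ∃ c : W, ∀ z : W, E z c ↔ z = a ∨ z = b := by
  simp only [pairAx, Sentence.Realize, Formula.Realize] at h
  simpa [mem', eq', E, Fin.snoc] using h a b

theorem exists_E_minimal_of_realize_foundAx (h : W ⊨ foundAx) {x : W} (hx : ∃ y, E y x) :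
    ∃ y, E y x ∧ ∀ z, E z y → ¬ E z x := by
  simp only [foundAx, Sentence.Realize, Formula.Realize] at h
  revert hx
  simpa [mem', E, Fin.snoc] using h x

theorem E_irrefl_of_realize (hpair : W ⊨ pairAx) (hfound : W ⊨ foundAx) (a : W) : ¬ E a a := by
  intro haa
  obtain ⟨c, hc⟩ := exists_pair_of_realize_pairAx hpair a a
  obtain ⟨y, hyc, hmin⟩ := exists_E_minimal_of_realize_foundAx hfound ⟨a, (hc a).2 (.inl rfl)⟩
  obtain rfl : y = a := by simpa using (hc y).1 hyc
  exact hmin y haa hyc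

theorem IsOrdW.E_of_E_of_le {a b c : W} (hc : IsOrdW c) (hab : E a b) (hbc : E b c ∨ b = c) :
    E a c := by
  rcases hbc with hbc | rfl
  · exact hc.1 b hbc a hab
  · exact hab

theorem WfBelow.of_E {a b : W} (hb : IsOrdW b) (hab : E a b) (h : WfBelow b) : WfBelow a :=
  h.subset fun _ hy => hb.1 a hab _ hy

end Model

/-- Together, `rank_lt` and `rank_cofinal` say `ρ t = sup_{s<t} (ρ s + 1)`. -/
structure IsRankedTree {W : Type*} [ZFLang.Structure W] (S : Set (List ℕ)) (ρ : List ℕ → W) :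
    Prop where
  prefix_mem : ∀ l ∈ S, ∀ l' : List ℕ, l' <+: l → l' ∈ S
  isOrdW : ∀ l ∈ S, IsOrdW (ρ l)
  rank_lt : ∀ t ∈ S, ∀ s ∈ S, t <+: s → t ≠ s → E (ρ s) (ρ t)
  rank_cofinal : ∀ t ∈ S, ∀ γ : W, E γ (ρ t) → ∃ s ∈ S, t <+: s ∧ t ≠ s ∧ (E γ (ρ s) ∨ γ = ρ s)

namespace IsRankedTree

variable {W : Type*} [ZFLang.Structure W] {S : Set (List ℕ)} {ρ : List ℕ → W} {p : List ℕ}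

theorem exists_child_rank_ge (hT : IsRankedTree S ρ) (hp : p ∈ S) {γ : W} (hγ : E γ (ρ p)) :
    ∃ m, p ++ [m] ∈ S ∧ (E γ (ρ (p ++ [m])) ∨ γ = ρ (p ++ [m])) := by
  obtain ⟨s, hs, hps, hne, hγs⟩ := hT.rank_cofinal p hp γ hγ
  obtain ⟨m, hms⟩ := hps.exists_append_singleton_isPrefix hne
  have hm : p ++ [m] ∈ S := hT.prefix_mem s hs _ hms
  refine ⟨m, hm, ?_⟩
  by_cases hs_eq : p ++ [m] = s
  · rwa [hs_eq]
  · have hsm : E (ρ s) (ρ (p ++ [m])) := hT.rank_lt _ hm s hs hms hs_eq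
    rcases hγs with hγs | rfl
    · exact .inl ((hT.isOrdW _ hm).E_of_E_of_le hγs (.inl hsm))
    · exact .inl hsm

theorem exists_child_rank_gt (hT : IsRankedTree S ρ) (hp : p ∈ S)
    (hlim : ∀ β : W, E β (ρ p) → ∃ γ : W, E β γ ∧ E γ (ρ p))
    {β : W} (hβ : E β (ρ p)) : ∃ m, p ++ [m] ∈ S ∧ E β (ρ (p ++ [m])) := by
  obtain ⟨γ, hβγ, hγ⟩ := hlim β hβ
  obtain ⟨m, hm, hγm⟩ := hT.exists_child_rank_ge hp hγ
  exact ⟨m, hm, (hT.isOrdW _ hm).E_of_E_of_le hβγ hγm⟩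

theorem infinite_children (hT : IsRankedTree S ρ) (hirrefl : ∀ a : W, ¬ E a a) (hp : p ∈ S)
    (hpos : ∃ y : W, E y (ρ p)) (hlim : ∀ β : W, E β (ρ p) → ∃ γ : W, E β γ ∧ E γ (ρ p)) :
    {m : ℕ | p ++ [m] ∈ S}.Infinite := by
  intro hfin
  obtain ⟨y, hy⟩ := hpos
  obtain ⟨m₀, hm₀, -⟩ := hT.exists_child_rank_gt hp hlim hy
  obtain ⟨m, hm, hmax⟩ :=
    hfin.exists_forall_not_rel (r := fun m m' => E (ρ (p ++ [m])) (ρ (p ++ [m']))) ⟨m₀, hm₀⟩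
      (fun _ _ _ _ _ hc hab hbc => (hT.isOrdW _ hc).E_of_E_of_le hab (.inl hbc))
      (fun _ _ => hirrefl _)
  obtain ⟨m', hm', hmm'⟩ :=
    hT.exists_child_rank_gt hp hlim (hT.rank_lt p hp _ hm ⟨[m], rfl⟩ (by simp))
  exact hmax m' hm' hmm'

theorem exists_two_children_not_wfBelow (hT : IsRankedTree S ρ) (hirrefl : ∀ a : W, ¬ E a a)
    (hp : p ∈ S) (hlim : ∀ β : W, E β (ρ p) → ∃ γ : W, E β γ ∧ E γ (ρ p))
    {β : W} (hβ : E β (ρ p)) (hillβ : ¬ WfBelow β) :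
    ∃ m₁ m₂ : ℕ, m₁ ≠ m₂ ∧ p ++ [m₁] ∈ S ∧ p ++ [m₂] ∈ S ∧
      ¬ WfBelow (ρ (p ++ [m₁])) ∧ ¬ WfBelow (ρ (p ++ [m₂])) := by
  obtain ⟨m₁, hm₁, hβm₁⟩ := hT.exists_child_rank_gt hp hlim hβ
  obtain ⟨m₂, hm₂, hm₁₂⟩ :=
    hT.exists_child_rank_gt hp hlim (hT.rank_lt p hp _ hm₁ ⟨[m₁], rfl⟩ (by simp))
  have hill₁ : ¬ WfBelow (ρ (p ++ [m₁])) := fun h => hillβ (h.of_E (hT.isOrdW _ hm₁) hβm₁)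
  refine ⟨m₁, m₂, ?_, hm₁, hm₂, hill₁, fun h => hill₁ (h.of_E (hT.isOrdW _ hm₂) hm₁₂)⟩
  rintro rfl
  exact hirrefl _ hm₁₂

end IsRankedTree

theorem stmt16_general (W : Type*) [ZFLang.Structure W] [ZFminusP.Model W]
    (hnoleast : ∀ α : W, IsOrdW α → ¬ WfBelow α → ∃ β : W, E β α ∧ ¬ WfBelow β)
    (S : Set (List ℕ)) (hpre : ∀ l ∈ S, ∀ l' : List ℕ, l' <+: l → l' ∈ S)
    (ρ : List ℕ → W) (hρord : ∀ l ∈ S, IsOrdW (ρ l))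
    (hrank₁ : ∀ t ∈ S, ∀ s ∈ S, t <+: s → t ≠ s → E (ρ s) (ρ t))
    (hrank₂ : ∀ t ∈ S, ∀ γ : W, E γ (ρ t) →
      ∃ s ∈ S, t <+: s ∧ t ≠ s ∧ (E γ (ρ s) ∨ γ = ρ s))
    (p : List ℕ) (hp : p ∈ S)
    (hlim₁ : ∃ y : W, E y (ρ p))
    (hlim₂ : ∀ β : W, E β (ρ p) → ∃ γ : W, E β γ ∧ E γ (ρ p))
    (hillp : ¬ WfBelow (ρ p)) :
    {m : ℕ | p ++ [m] ∈ S}.Infinite ∧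
      ∃ m₁ m₂ : ℕ, m₁ ≠ m₂ ∧ p ++ [m₁] ∈ S ∧ p ++ [m₂] ∈ S ∧
        ¬ WfBelow (ρ (p ++ [m₁])) ∧ ¬ WfBelow (ρ (p ++ [m₂])) := by
  have hT : IsRankedTree S ρ := ⟨hpre, hρord, hrank₁, hrank₂⟩
  have hirrefl : ∀ a : W, ¬ E a a :=
    E_irrefl_of_realize (ZFminusP.realize_sentence_of_mem (by simp [ZFminusP]))
      (ZFminusP.realize_sentence_of_mem (by simp [ZFminusP]))
  obtain ⟨β, hβ, hillβ⟩ := hnoleast (ρ p) (hρord p hp) hillp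
  exact ⟨hT.infinite_children hirrefl hp hlim₁ hlim₂,
    hT.exists_two_children_not_wfBelow hirrefl hp hlim₂ hβ hillβ⟩

/-- in a model `N` of ZF⁻ with standard `ω` whose ill-founded ordinals
have no least element, if `S` is a sequential tree of `N` with internal rank function
`ρ` satisfying `ρ(t) = sup_{s<t}(ρ(s)+1)`, and `p ∈ S` has internally-limit, externally
ill-founded rank, then `p` has infinitely many immediate successors, among which are two
incomparable nodes of ill-founded rank. -/
theorem stmt16 (W : Type*) [ZFLang.Structure W] [ZFminusP.Model W]
    (hstd : StdOmega W)
    (hnoleast : ∀ α : W, IsOrdW α → ¬ WfBelow α → ∃ β : W, E β α ∧ ¬ WfBelow β)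
    (S : Set (List ℕ)) (hpre : ∀ l ∈ S, ∀ l' : List ℕ, l' <+: l → l' ∈ S)
    (ρ : List ℕ → W) (hρord : ∀ l ∈ S, IsOrdW (ρ l))
    (hrank₁ : ∀ t ∈ S, ∀ s ∈ S, t <+: s → t ≠ s → E (ρ s) (ρ t))
    (hrank₂ : ∀ t ∈ S, ∀ γ : W, E γ (ρ t) →
      ∃ s ∈ S, t <+: s ∧ t ≠ s ∧ (E γ (ρ s) ∨ γ = ρ s))
    (p : List ℕ) (hp : p ∈ S)
    (hlim₁ : ∃ y : W, E y (ρ p))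
    (hlim₂ : ∀ β : W, E β (ρ p) → ∃ γ : W, E β γ ∧ E γ (ρ p))
    (hillp : ¬ WfBelow (ρ p)) :
    {m : ℕ | p ++ [m] ∈ S}.Infinite ∧
      ∃ m₁ m₂ : ℕ, m₁ ≠ m₂ ∧ p ++ [m₁] ∈ S ∧ p ++ [m₂] ∈ S ∧
        ¬ WfBelow (ρ (p ++ [m₁])) ∧ ¬ WfBelow (ρ (p ++ [m₂])) :=
  stmt16_general W hnoleast S hpre ρ hρord hrank₁ hrank₂ p hp hlim₁ hlim₂ hillp
end

section
/- Rowbottom-style partition theorem for supercompactness measures: if U is a normal fine κ-complete ultrafilter on P_κ(λ) and F : [P_κ(λ)]^{<ω} → 2, then there exist A ∈ U and r ∈ 2^ω such that for every n and every sequence x_0 ⊆ x_1 ⊆ … ⊆ x_{n-1} of elements of A with |x_i| < x_{i+1} ∩ κ ∈ κ for each i, we have F({x_0, …, x_{n-1}}) = r(n). -/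
/-- `P_κ(λ)`: the collection of subsets of (the ordinals below) `λ` of size `< κ`. -/
def Pkl (κ lam : Cardinal.{0}) : Set (Set Ordinal.{0}) :=
  {x | x ⊆ Set.Iio lam.ord ∧ Cardinal.mk ↥x < Cardinal.lift.{1,0} κ}

/-!
Normality gives pressing down: a function with `g y ∈ y` on a measure-one set is constant on a
measure-one set. Enumerating a suitable predecessor `g y ⊆ y` along the initial ordinal of `|g y|`,
which lies in `y ∩ κ`, and pressing down that ordinal and then each coordinate (intersecting fewer
than `κ` sets by completeness) extends this to set-valued `g`. Hence `U` is closed under diagonal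
intersections `{y | ∀ x suitable below y, y ∈ A x}`. Homogeneity for chains of length `n + 1` then
follows from length `n` as in Rowbottom's theorem: colour each `x` by the colour of the chains above
it, fix that colour on a measure-one set and intersect diagonally the sets witnessing homogeneity
above each `x`. Fineness and normality force `κ > ω`, so the homogeneous sets for all lengths can be
intersected.
-/

open Cardinal Set Filter

universe u

namespace Pkl

variable {κ lam : Cardinal.{0}}

def IsComplete (U : Ultrafilter (Pkl κ lam)) : Prop :=
  ∀ I : Set (Set (Pkl κ lam)), #I < lift.{1} κ → (∀ s ∈ I, s ∈ U) → ⋂₀ I ∈ U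

def IsFine (U : Ultrafilter (Pkl κ lam)) : Prop :=
  ∀ a : Ordinal, a < lam.ord → {x : Pkl κ lam | a ∈ x.1} ∈ U

def IsNormal (U : Ultrafilter (Pkl κ lam)) : Prop :=
  ∀ A : Ordinal → Set (Pkl κ lam), (∀ a, a < lam.ord → A a ∈ U) →
    {x : Pkl κ lam | ∀ a ∈ x.1, x ∈ A a} ∈ U

/-- The paper's `x ⊆ y ∧ |x| < y ∩ κ ∈ κ`, required of consecutive members of a chain. -/
def Suitable (κ : Cardinal.{0}) (x y : Set Ordinal.{0}) : Prop :=
  x ⊆ y ∧ ∃ β : Ordinal, β < κ.ord ∧ y ∩ Iio κ.ord = Iio β ∧ #x < lift.{1} β.card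

def IsSuitableChain (κ : Cardinal.{0}) {n : ℕ} (x : Fin n → Set Ordinal.{0}) : Prop :=
  ∀ (i : Fin n) (hi : (i : ℕ) + 1 < n), Suitable κ (x i) (x ⟨i + 1, hi⟩)

variable {U : Ultrafilter (Pkl κ lam)}

theorem IsComplete.iInter_mem (hU : IsComplete U) {ι : Type u} {A : ι → Set (Pkl κ lam)}
    (hι : lift.{1} #ι < lift.{max u 1} κ) (hA : ∀ i, A i ∈ U) : ⋂ i, A i ∈ U := by
  rw [← sInter_range]
  refine hU _ ?_ (forall_mem_range.2 hA)
  rw [← lift_lift.{1, u} κ] at hι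
  exact lift_lt.1 (mk_range_le_lift.trans_lt hι)

theorem IsNormal.pressing_down (hU : IsNormal U) {S : Set (Pkl κ lam)} (hS : S ∈ U)
    (g : Pkl κ lam → Ordinal.{0}) (hg : ∀ y ∈ S, g y ∈ y.1) :
    ∃ a, {y | y ∈ S ∧ g y = a} ∈ U := by
  by_contra! h
  have hD := hU (fun a => {y | y ∈ S ∧ g y = a}ᶜ) fun a _ => U.compl_mem_iff_notMem.2 (h a)
  obtain ⟨y, hyD, hyS⟩ := U.nonempty_of_mem (inter_mem hD hS)
  exact hyD (g y) (hg y hyS) ⟨hyS, rfl⟩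

theorem IsFine.aleph0_lt (hf : IsFine U) (hn : IsNormal U) (hlam : ℵ₀ ≤ lam) :
    ℵ₀ < κ := by
  have hlim : Order.IsSuccLimit lam.ord := isSuccLimit_ord hlam
  have hD := hn (fun a => {y | Order.succ a ∈ y.1}) fun a ha => hf _ (hlim.succ_lt ha)
  obtain ⟨y, hy, hy0⟩ := U.nonempty_of_mem (inter_mem hD (hf 0 hlim.bot_lt))
  have hinf : y.1.Infinite := fun hfin => by
    obtain ⟨m, hm, hmax⟩ := exists_max_image y.1 id hfin ⟨0, hy0⟩
    exact (Order.lt_succ m).not_ge (hmax _ (hy m hm))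
  have := (infinite_iff.1 hinf.to_subtype).trans_lt y.2.2
  rwa [← lift_aleph0.{1, 0}, lift_lt] at this

theorem exists_image_Iio_ord_eq {s : Set Ordinal.{0}} {c : Cardinal.{0}} (hs : #s = lift.{1} c) :
    ∃ f : Ordinal.{0} → Ordinal.{0}, f '' Iio c.ord = s := by
  obtain ⟨e⟩ : Nonempty (Iio c.ord ≃ s) := by
    rw [← Cardinal.eq, mk_Iio_ordinal, card_ord, hs]
  classical
  refine ⟨fun i => if h : i < c.ord then e ⟨i, h⟩ else 0, ?_⟩
  calc _ = range (fun i : Iio c.ord => (e i : Ordinal)) := by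
        rw [image_eq_range]
        exact congrArg range (funext fun i => dif_pos i.2)
    _ = s := by rw [← Function.comp_def, e.surjective.range_comp, Subtype.range_coe]

theorem IsNormal.pressing_down_suitable (hn : IsNormal U) (hc : IsComplete U)
    {S : Set (Pkl κ lam)} (hS : S ∈ U) (g : Pkl κ lam → Set Ordinal.{0})
    (hg : ∀ y ∈ S, Suitable κ (g y) y.1) : ∃ t, {y | y ∈ S ∧ g y = t} ∈ U := by
  have hcard : ∀ y ∈ S, ∃ c : Cardinal.{0}, lift.{1} c = #(g y) ∧ c.ord ∈ y.1 := by
    intro y hy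
    obtain ⟨-, β, -, hβ, hlt⟩ := hg y hy
    obtain ⟨c, hcβ, hc⟩ := lt_lift_iff.1 hlt
    have hcβ : c.ord < β :=
      lt_of_not_ge fun h => ((Ordinal.card_le_card h).trans_eq (card_ord c)).not_gt hcβ
    exact ⟨c, hc, (hβ.symm ▸ hcβ : c.ord ∈ y.1 ∩ Iio κ.ord).1⟩
  choose! c hc_card hc_mem using hcard
  choose! f hf using fun y (hy : y ∈ S) => exists_image_Iio_ord_eq (hc_card y hy).symm
  obtain ⟨δ, hδ⟩ := hn.pressing_down hS (fun y => (c y).ord) hc_mem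
  set S₁ := {y | y ∈ S ∧ (c y).ord = δ}
  have hS₁ : ∀ y ∈ S₁, f y '' Iio δ = g y := fun y hy => hy.2 ▸ hf y hy.1
  have hcoord : ∀ i < δ, ∃ a, {y | y ∈ S₁ ∧ f y i = a} ∈ U := fun i hi =>
    hn.pressing_down hδ _ fun y hy => (hg y hy.1).1 (hS₁ y hy ▸ mem_image_of_mem _ hi)
  choose! a ha using hcoord
  have hδκ : δ.card < κ := by
    obtain ⟨y, hy, rfl⟩ := U.nonempty_of_mem hδ
    rw [card_ord]
    apply lift_lt.{0, 1}.1
    rw [hc_card y hy]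
    exact (mk_le_mk_of_subset (hg y hy).1).trans_lt y.2.2
  have hI : ⋂ i : Iio δ, {y | y ∈ S₁ ∧ f y i = a i} ∈ U :=
    hc.iInter_mem (by rw [mk_Iio_ordinal, lift_id'.{1, 1}, lift_lt]; exact hδκ) fun i => ha i i.2
  refine ⟨a '' Iio δ, mem_of_superset (inter_mem hI hδ) ?_⟩
  rintro y ⟨hyI, hy⟩
  exact ⟨hy.1,
    (hS₁ y hy).symm.trans (image_congr fun i hi => (mem_iInter.1 hyI ⟨i, hi⟩).2)⟩

theorem diagonal_mem (hc : IsComplete U) (hn : IsNormal U)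
    (A : Pkl κ lam → Set (Pkl κ lam)) (hA : ∀ x, A x ∈ U) :
    {y | ∀ x : Pkl κ lam, Suitable κ x.1 y.1 → y ∈ A x} ∈ U := by
  by_contra h
  set B := {y | ∃ x : Pkl κ lam, Suitable κ x.1 y.1 ∧ y ∉ A x}
  have hB : B ∈ U := by
    simpa only [compl_ofPred, not_forall, exists_prop] using U.compl_mem_iff_notMem.2 h
  choose! w hw_suit hw_notMem using fun y (hy : y ∈ B) => hy
  obtain ⟨t, ht⟩ := hn.pressing_down_suitable hc hB (fun y => (w y).1) hw_suit
  obtain ⟨y₀, -, hy₀⟩ := U.nonempty_of_mem ht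
  obtain ⟨y, ⟨hyB, hy⟩, hyA⟩ := U.nonempty_of_mem (inter_mem ht (hA (w y₀)))
  rw [show w y₀ = w y from Subtype.ext (hy₀.trans hy.symm)] at hyA
  exact hw_notMem y hyB hyA

theorem Suitable.of_subset_left {x x' y : Set Ordinal.{0}} (h : Suitable κ x y) (hx : x' ⊆ x) :
    Suitable κ x' y :=
  let ⟨hxy, β, hβ, hy, hcard⟩ := h
  ⟨hx.trans hxy, β, hβ, hy, (mk_le_mk_of_subset hx).trans_lt hcard⟩

namespace IsSuitableChain

variable {n : ℕ} {x : Fin (n + 1) → Set Ordinal.{0}}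

theorem tail (hx : IsSuitableChain κ x) : IsSuitableChain κ (Fin.tail x) :=
  fun i hi => hx i.succ (by simpa using hi)

theorem zero_subset (hx : IsSuitableChain κ x) (j : Fin (n + 1)) : x 0 ⊆ x j := by
  induction j using Fin.induction with
  | zero => exact subset_rfl
  | succ j ih => exact ih.trans (hx j.castSucc (by simp)).1

theorem suitable_zero_succ (hx : IsSuitableChain κ x) (j : Fin n) : Suitable κ (x 0) (x j.succ) :=
  (hx j.castSucc (by simp)).of_subset_left (hx.zero_subset j.castSucc)

end IsSuitableChain

theorem exists_homogeneous (hc : IsComplete U) (hn : IsNormal U) {β : Type*} [Finite β] (n : ℕ)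
    (F : Set (Set Ordinal.{0}) → β) :
    ∃ A ∈ U, ∃ b : β, ∀ x : Fin n → Pkl κ lam, (∀ i, x i ∈ A) →
      IsSuitableChain κ (fun i => (x i).1) → F {s | ∃ i, s = (x i).1} = b := by
  induction n generalizing F with
  | zero => exact ⟨univ, univ_mem, F ∅, fun x _ _ => congrArg F (by simp)⟩
  | succ n ih =>
    choose A hA b hb using fun z : Pkl κ lam => ih fun S => F (insert z.1 S)
    obtain ⟨b₀, hb₀⟩ := (U.map b).eq_pure_of_finite
    have hb₀U : b ⁻¹' {b₀} ∈ U := (Ultrafilter.ext_iff.1 hb₀ {b₀}).2 rfl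
    refine ⟨b ⁻¹' {b₀} ∩ {y | ∀ x : Pkl κ lam, Suitable κ x.1 y.1 → y ∈ A x},
      inter_mem hb₀U (diagonal_mem hc hn A hA), b₀, fun x hxA hx => ?_⟩
    have hxs : {s | ∃ i, s = (x i).1} = insert (x 0).1 {s | ∃ i : Fin n, s = (x i.succ).1} := by
      ext s
      simp [Fin.exists_fin_succ]
    have htail : ∀ i : Fin n, x i.succ ∈ A (x 0) := fun i =>
      (hxA i.succ).2 _ (hx.suitable_zero_succ i)
    rw [hxs, hb (x 0) (fun i => x i.succ) htail hx.tail]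
    exact (hxA 0).1

end Pkl

/-- Rowbottom-style partition theorem for supercompactness measures:
if `U` is a normal fine `κ`-complete ultrafilter on `P_κ(λ)` and
`F : [P_κ(λ)]^{<ω} → 2`, then there are `A ∈ U` and `r : ω → 2` such that
`F({x₀, …, x_{n-1}}) = r(n)` for every `⊆`-increasing chain `x₀ ⊆ ⋯ ⊆ x_{n-1}` from `A`
with `|xᵢ| < x_{i+1} ∩ κ ∈ κ`. -/
theorem stmt19 (κ lam : Cardinal.{0}) (hκ : κ.IsRegular) (hκlam : κ ≤ lam)
    (U : Ultrafilter ↥(Pkl κ lam))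
    -- κ-completeness:
    (hcomp : ∀ I : Set (Set ↥(Pkl κ lam)), Cardinal.mk ↥I < Cardinal.lift.{1,0} κ →
      (∀ s ∈ I, s ∈ U) → ⋂₀ I ∈ U)
    -- fineness:
    (hfine : ∀ a : Ordinal, a < lam.ord → {x : ↥(Pkl κ lam) | a ∈ x.1} ∈ U)
    -- normality (closure under diagonal intersections):
    (hnorm : ∀ Fm : Ordinal → Set ↥(Pkl κ lam), (∀ a, a < lam.ord → Fm a ∈ U) →
      {x : ↥(Pkl κ lam) | ∀ a ∈ x.1, x ∈ Fm a} ∈ U)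
    (F : Set (Set Ordinal) → Fin 2) :
    ∃ A ∈ U, ∃ r : ℕ → Fin 2,
      ∀ (n : ℕ) (x : Fin n → ↥(Pkl κ lam)), (∀ i, x i ∈ A) →
        (∀ (i : Fin n) (hi : (i : ℕ) + 1 < n),
          (x i).1 ⊆ (x ⟨(i : ℕ) + 1, hi⟩).1 ∧
          ∃ β : Ordinal, β < κ.ord ∧
            (x ⟨(i : ℕ) + 1, hi⟩).1 ∩ Set.Iio κ.ord = Set.Iio β ∧
            Cardinal.mk ↥(x i).1 < Cardinal.lift.{1,0} β.card) →
        F {s | ∃ i : Fin n, s = (x i).1} = r n := by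
  have hκ₀ : ℵ₀ < κ := Pkl.IsFine.aleph0_lt hfine hnorm (hκ.aleph0_le.trans hκlam)
  choose A hA r hr using fun n => Pkl.exists_homogeneous hcomp hnorm n F
  refine ⟨⋂ n, A n, Pkl.IsComplete.iInter_mem hcomp (by simpa using hκ₀) hA, r, ?_⟩
  exact fun n x hxA hx => hr n x (fun i => mem_iInter.1 (hxA i) n) hx
end
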